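/- arXiv:2006.03621 — 6 statements merged into one kernel-verified Lean document; each statement's English description precedes it below -/
import Mathlib

section
/- Let (d_n) be integers with 1 ≤ d_n ≤ n, d_n → ∞ and d_n/n → 0, and let λ_n ∈ (0,1) with λ_n → 1. Let μ_n be the associated near fixed point and suppose for some integer k ≥ 2 that μ_{n,k} → 1 and β'_n(μ_{n,k}) → α for some α ∈ [0,∞). Then β'_n(μ_{n,1}) → ∞, and for every i ∈ {1, …, k−1}, β'_n(μ_{n,i}) / β'_n(μ_{n,1}) → 1 as n → ∞. -/
open Filter Topology

/-- `β_n(x) = ∏_{i=0}^{d−1} ((x − i/n)/(1 − i/n))⁺`. -/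
noncomputable def betaFn (n d : ℕ) (x : ℝ) : ℝ :=
  ∏ i ∈ Finset.range d, max ((x - (i : ℝ) / (n : ℝ)) / (1 - (i : ℝ) / (n : ℝ))) 0

/-- The derivative `β'_n` of `β_n` away from `(d−1)/n`, set to `0` for
`x ≤ (d−1)/n`. -/
noncomputable def betaDeriv (n d : ℕ) (x : ℝ) : ℝ :=
  if ((d : ℝ) - 1) / (n : ℝ) < x then
    ∑ j ∈ Finset.range d, (1 - (j : ℝ) / (n : ℝ))⁻¹ *
      ∏ i ∈ (Finset.range d).erase j, (x - (i : ℝ) / (n : ℝ)) / (1 - (i : ℝ) / (n : ℝ))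
  else 0


/-- The near fixed point: `muSeq n d lam i` is the paper's `μ_{n,i+1}`, i.e.
`μ_{n,1} = λ_n` and `μ_{n,i+1} = λ_n β_n(μ_{n,i})`. -/
noncomputable def muSeq (n d : ℕ) (lam : ℝ) : ℕ → ℝ
  | 0 => lam
  | i + 1 => lam * betaFn n d (muSeq n d lam i)

lemma fac_pos {n d : ℕ} (hn : 1 ≤ n) (hdn : d ≤ n) {i : ℕ} (hi : i ∈ Finset.range d) :
    (0:ℝ) < 1 - (i:ℝ)/(n:ℝ) := by
  rw [Finset.mem_range] at hi
  have hnpos : (0:ℝ) < n := by exact_mod_cast hn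
  have h1 : (i:ℝ) < n := by exact_mod_cast lt_of_lt_of_le hi hdn
  have h2 : (i:ℝ)/n < 1 := (div_lt_one hnpos).2 h1
  linarith

lemma betaFn_nonneg (n d : ℕ) (x : ℝ) : 0 ≤ betaFn n d x :=
  Finset.prod_nonneg fun _ _ => le_max_right _ _

lemma betaFn_mono {n d : ℕ} (hn : 1 ≤ n) (hdn : d ≤ n) {x y : ℝ} (h : x ≤ y) :
    betaFn n d x ≤ betaFn n d y := by
  apply Finset.prod_le_prod (fun i _ => le_max_right _ _)
  intro i hi
  apply max_le_max _ le_rfl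
  exact (div_le_div_iff_of_pos_right (fac_pos hn hdn hi)).2 (by linarith)

lemma betaFn_le_self {n d : ℕ} (hn : 1 ≤ n) (hd1 : 1 ≤ d) (hdn : d ≤ n) {x : ℝ}
    (hx0 : 0 ≤ x) (hx1 : x ≤ 1) : betaFn n d x ≤ x := by
  have h1 : betaFn n d x ≤ x ^ d := by
    calc betaFn n d x ≤ ∏ _i ∈ Finset.range d, x := by
          apply Finset.prod_le_prod (fun i _ => le_max_right _ _)
          intro i hi
          have hc := fac_pos hn hdn hi
          have hinn : (0:ℝ) ≤ (i:ℝ)/(n:ℝ) := by positivity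
          apply max_le _ hx0
          rw [div_le_iff₀ hc]
          nlinarith [mul_nonneg hinn (sub_nonneg.2 hx1)]
      _ = x ^ d := by simp
  calc betaFn n d x ≤ x ^ d := h1
    _ ≤ x ^ 1 := pow_le_pow_of_le_one hx0 hx1 hd1
    _ = x := pow_one x

lemma muSeq_props {n d : ℕ} (hn : 1 ≤ n) (hd1 : 1 ≤ d) (hdn : d ≤ n) {lam : ℝ}
    (h0 : 0 < lam) (h1 : lam < 1) :
    ∀ i, 0 ≤ muSeq n d lam i ∧ muSeq n d lam i ≤ lam ∧
      muSeq n d lam (i+1) ≤ muSeq n d lam i := by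
  intro i
  induction i with
  | zero =>
    refine ⟨le_of_lt h0, le_rfl, ?_⟩
    show lam * betaFn n d lam ≤ lam
    have hb := betaFn_le_self hn hd1 hdn (le_of_lt h0) (le_of_lt h1)
    nlinarith
  | succ i ih =>
    obtain ⟨hnn, hle, hdec⟩ := ih
    refine ⟨?_, le_trans hdec hle, ?_⟩
    · exact mul_nonneg (le_of_lt h0) (betaFn_nonneg _ _ _)
    · show lam * betaFn n d (muSeq n d lam (i+1)) ≤ lam * betaFn n d (muSeq n d lam i)
      exact mul_le_mul_of_nonneg_left (betaFn_mono hn hdn hdec) (le_of_lt h0)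

lemma muSeq_anti {n d : ℕ} (hn : 1 ≤ n) (hd1 : 1 ≤ d) (hdn : d ≤ n) {lam : ℝ}
    (h0 : 0 < lam) (h1 : lam < 1) : Antitone (muSeq n d lam) :=
  antitone_nat_of_succ_le fun i => (muSeq_props hn hd1 hdn h0 h1 i).2.2

lemma betaDeriv_eq {n d : ℕ} (hn : 1 ≤ n) (hdn : d ≤ n) {x : ℝ}
    (hx : ((d:ℝ)-1)/(n:ℝ) < x) :
    betaDeriv n d x = betaFn n d x * ∑ j ∈ Finset.range d, (x - (j:ℝ)/(n:ℝ))⁻¹ := by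
  have hnpos : (0:ℝ) < n := by exact_mod_cast hn
  have hxj : ∀ j ∈ Finset.range d, 0 < x - (j:ℝ)/(n:ℝ) := by
    intro j hj
    rw [Finset.mem_range] at hj
    have : (j:ℝ) ≤ (d:ℝ) - 1 := by
      have : (j:ℝ) + 1 ≤ (d:ℝ) := by exact_mod_cast hj
      linarith
    have : (j:ℝ)/(n:ℝ) ≤ ((d:ℝ)-1)/(n:ℝ) := (div_le_div_iff_of_pos_right hnpos).2 this
    linarith
  have hbeta : betaFn n d x = ∏ i ∈ Finset.range d, (x - (i:ℝ)/(n:ℝ))/(1 - (i:ℝ)/(n:ℝ)) := by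
    apply Finset.prod_congr rfl
    intro i hi
    exact max_eq_left (le_of_lt (div_pos (hxj i hi) (fac_pos hn hdn hi)))
  rw [betaDeriv, if_pos hx, hbeta, Finset.mul_sum]
  apply Finset.sum_congr rfl
  intro j hj
  rw [← Finset.mul_prod_erase _ _ hj]
  have h1 : (x - (j:ℝ)/(n:ℝ)) ≠ 0 := ne_of_gt (hxj j hj)
  have h2 : (1 - (j:ℝ)/(n:ℝ)) ≠ 0 := ne_of_gt (fac_pos hn hdn hj)
  set P := ∏ i ∈ (Finset.range d).erase j, (x - (i:ℝ)/(n:ℝ))/(1 - (i:ℝ)/(n:ℝ)) with hP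
  have key : ((x - (j:ℝ)/(n:ℝ))/(1 - (j:ℝ)/(n:ℝ)) * P) * (x - (j:ℝ)/(n:ℝ))⁻¹ =
      (1 - (j:ℝ)/(n:ℝ))⁻¹ * P * ((x - (j:ℝ)/(n:ℝ)) * (x - (j:ℝ)/(n:ℝ))⁻¹) := by
    rw [div_eq_mul_inv]; ring
  rw [key, mul_inv_cancel₀ h1, mul_one]

lemma betaDeriv_lower {n d : ℕ} (hn : 1 ≤ n) (hdn : d ≤ n) {x : ℝ}
    (hx : ((d:ℝ)-1)/(n:ℝ) < x) (hx1 : x ≤ 1) :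
    betaFn n d x * d ≤ betaDeriv n d x := by
  have hnpos : (0:ℝ) < n := by exact_mod_cast hn
  rw [betaDeriv_eq hn hdn hx]
  apply mul_le_mul_of_nonneg_left _ (betaFn_nonneg _ _ _)
  have hxj : ∀ j ∈ Finset.range d, 0 < x - (j:ℝ)/(n:ℝ) := by
    intro j hj
    rw [Finset.mem_range] at hj
    have h3 : (j:ℝ) ≤ (d:ℝ) - 1 := by
      have : (j:ℝ) + 1 ≤ (d:ℝ) := by exact_mod_cast hj
      linarith
    have : (j:ℝ)/(n:ℝ) ≤ ((d:ℝ)-1)/(n:ℝ) := (div_le_div_iff_of_pos_right hnpos).2 h3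
    linarith
  calc (d:ℝ) = ∑ _j ∈ Finset.range d, (1:ℝ) := by simp
    _ ≤ ∑ j ∈ Finset.range d, (x - (j:ℝ)/(n:ℝ))⁻¹ := by
        apply Finset.sum_le_sum
        intro j hj
        apply (one_le_inv₀ (hxj j hj)).2
        have : (0:ℝ) ≤ (j:ℝ)/(n:ℝ) := by positivity
        linarith

lemma betaDeriv_upper {n d : ℕ} (hn : 1 ≤ n) (hdn : d ≤ n) {x : ℝ}
    (hx : ((d:ℝ)-1)/(n:ℝ) < x) :
    betaDeriv n d x ≤ betaFn n d x * d * (x - ((d:ℝ)-1)/(n:ℝ))⁻¹ := by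
  have hnpos : (0:ℝ) < n := by exact_mod_cast hn
  rw [betaDeriv_eq hn hdn hx, mul_assoc]
  apply mul_le_mul_of_nonneg_left _ (betaFn_nonneg _ _ _)
  have hsum : ∑ j ∈ Finset.range d, (x - (j:ℝ)/(n:ℝ))⁻¹ ≤
      (Finset.range d).card • (x - ((d:ℝ)-1)/(n:ℝ))⁻¹ := by
    apply Finset.sum_le_card_nsmul
    intro j hj
    rw [Finset.mem_range] at hj
    have h3 : (j:ℝ) ≤ (d:ℝ) - 1 := by
      have : (j:ℝ) + 1 ≤ (d:ℝ) := by exact_mod_cast hj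
      linarith
    have h4 : (j:ℝ)/(n:ℝ) ≤ ((d:ℝ)-1)/(n:ℝ) := (div_le_div_iff_of_pos_right hnpos).2 h3
    exact inv_anti₀ (by linarith) (by linarith)
  calc ∑ j ∈ Finset.range d, (x - (j:ℝ)/(n:ℝ))⁻¹
      ≤ (Finset.range d).card • (x - ((d:ℝ)-1)/(n:ℝ))⁻¹ := hsum
    _ = (d:ℝ) * (x - ((d:ℝ)-1)/(n:ℝ))⁻¹ := by
        rw [Finset.card_range, nsmul_eq_mul]

lemma ratio_eq1 {P Q D c : ℝ} (hQ : Q ≠ 0) (hD : D ≠ 0) :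
    P / Q * c = P * D / (Q * D * c⁻¹) := by
  field_simp
lemma ratio_eq2 {P Q D c : ℝ} (hQ : Q ≠ 0) (hD : D ≠ 0) :
    P / Q * c⁻¹ = P * D * c⁻¹ / (Q * D) := by
  rw [div_mul_eq_mul_div, show P * D * c⁻¹ = P * c⁻¹ * D by ring,
    mul_div_mul_right _ _ hD]

/-- Lemma 5.6: if `d_n → ∞`, `d_n/n → 0`, `λ_n ∈ (0,1)`, `λ_n → 1`, and for some
`k ≥ 2`, `μ_{n,k} → 1` and `β'_n(μ_{n,k}) → α ∈ [0,∞)`, then `β'_n(μ_{n,1}) → ∞`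
and `β'_n(μ_{n,i})/β'_n(μ_{n,1}) → 1` for every `i ∈ {1,…,k−1}`. -/
theorem stmt9 (d : ℕ → ℕ) (hd : ∀ n : ℕ, 1 ≤ n → 1 ≤ d n ∧ d n ≤ n)
    (hdtop : Tendsto d atTop atTop)
    (hdn : Tendsto (fun n => (d n : ℝ) / (n : ℝ)) atTop (𝓝 0))
    (lam : ℕ → ℝ) (hlam : ∀ n, lam n ∈ Set.Ioo (0 : ℝ) 1)
    (hlam1 : Tendsto lam atTop (𝓝 1))
    (k : ℕ) (hk : 2 ≤ k)
    (hmuk : Tendsto (fun n => muSeq n (d n) (lam n) (k - 1)) atTop (𝓝 1))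
    (α : ℝ) (hα : 0 ≤ α)
    (hbk : Tendsto (fun n => betaDeriv n (d n) (muSeq n (d n) (lam n) (k - 1)))
      atTop (𝓝 α)) :
    Tendsto (fun n => betaDeriv n (d n) (muSeq n (d n) (lam n) 0)) atTop atTop ∧
    ∀ i : ℕ, 1 ≤ i → i ≤ k - 1 →
      Tendsto (fun n => betaDeriv n (d n) (muSeq n (d n) (lam n) (i - 1)) /
          betaDeriv n (d n) (muSeq n (d n) (lam n) 0))
        atTop (𝓝 1) := by
  have hev1 : ∀ᶠ n : ℕ in atTop, 1 ≤ n := eventually_ge_atTop 1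
  -- (d n - 1)/n → 0
  have hdd0 : Tendsto (fun n => ((d n : ℝ) - 1) / (n : ℝ)) atTop (𝓝 0) := by
    apply tendsto_of_tendsto_of_tendsto_of_le_of_le' tendsto_const_nhds hdn
    · filter_upwards [hev1] with n hn
      have h1 : (1:ℝ) ≤ (d n : ℝ) := by exact_mod_cast (hd n hn).1
      have h2 : (0:ℝ) ≤ (n:ℝ) := by positivity
      exact div_nonneg (by linarith) h2
    · filter_upwards [hev1] with n hn
      have hnpos : (0:ℝ) < (n:ℝ) := by exact_mod_cast hn
      exact (div_le_div_iff_of_pos_right hnpos).2 (by linarith)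
  -- monotonicity of muSeq
  have hmono : ∀ᶠ n : ℕ in atTop, ∀ i j : ℕ, i ≤ j →
      muSeq n (d n) (lam n) j ≤ muSeq n (d n) (lam n) i := by
    filter_upwards [hev1] with n hn
    exact fun i j hij =>
      muSeq_anti hn (hd n hn).1 (hd n hn).2 (hlam n).1 (hlam n).2 hij
  -- μ_i → 1 for all i ≤ k-1
  have hμ : ∀ i, i ≤ k - 1 →
      Tendsto (fun n => muSeq n (d n) (lam n) i) atTop (𝓝 1) := by
    intro i hi
    apply tendsto_of_tendsto_of_tendsto_of_le_of_le' hmuk hlam1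
    · filter_upwards [hmono] with n hm
      exact hm i (k-1) hi
    · filter_upwards [hmono] with n hm
      exact hm 0 i (Nat.zero_le i)
  -- β(μ_i) → 1 for i + 1 ≤ k-1
  have hβ : ∀ i, i + 1 ≤ k - 1 →
      Tendsto (fun n => betaFn n (d n) (muSeq n (d n) (lam n) i)) atTop (𝓝 1) := by
    intro i hi
    have h := (hμ (i+1) hi).div hlam1 one_ne_zero
    rw [div_one] at h
    refine Tendsto.congr (fun n => ?_) h
    have hl : lam n ≠ 0 := ne_of_gt (hlam n).1
    show muSeq n (d n) (lam n) (i+1) / lam n = _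
    rw [show muSeq n (d n) (lam n) (i+1) =
      lam n * betaFn n (d n) (muSeq n (d n) (lam n) i) from rfl]
    field_simp
  have hd' : Tendsto (fun n => (d n : ℝ)) atTop atTop :=
    tendsto_natCast_atTop_atTop.comp hdtop
  -- eventual condition (d-1)/n < μ_i
  have hcond : ∀ i, i ≤ k - 1 → ∀ᶠ n : ℕ in atTop,
      ((d n : ℝ) - 1) / (n : ℝ) < muSeq n (d n) (lam n) i := by
    intro i hi
    have h := (hμ i hi).sub hdd0
    rw [sub_zero] at h
    have := h.eventually (eventually_gt_nhds (by norm_num : (0:ℝ) < 1))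
    filter_upwards [this] with n hn
    linarith
  -- eventual lower bounds on betaFn values
  have hhalf : ∀ i, i + 1 ≤ k - 1 → ∀ᶠ n : ℕ in atTop,
      (1/2 : ℝ) ≤ betaFn n (d n) (muSeq n (d n) (lam n) i) := by
    intro i hi
    exact (hβ i hi).eventually (eventually_ge_nhds (by norm_num : (1:ℝ)/2 < 1))
  have hk1 : 0 + 1 ≤ k - 1 := by omega
  constructor
  · -- first part
    apply tendsto_atTop_mono' atTop ?_
      (Tendsto.const_mul_atTop (by norm_num : (0:ℝ) < 1/2) hd')
    filter_upwards [hev1, hhalf 0 hk1, hcond 0 (by omega)] with n hn hh hc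
    have hdle := hd n hn
    have hl1 : muSeq n (d n) (lam n) 0 ≤ 1 := le_of_lt (hlam n).2
    calc (1/2 : ℝ) * (d n : ℝ)
        ≤ betaFn n (d n) (muSeq n (d n) (lam n) 0) * (d n : ℝ) := by
          apply mul_le_mul_of_nonneg_right hh (by positivity)
      _ ≤ betaDeriv n (d n) (muSeq n (d n) (lam n) 0) :=
          betaDeriv_lower hn hdle.2 hc hl1
  · -- second part
    intro i hi1 hik
    have hj : (i - 1) + 1 ≤ k - 1 := by omega
    have hjk : i - 1 ≤ k - 1 := by omega
    have hP := hβ (i-1) hj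
    have hQ := hβ 0 hk1
    have hμj := hμ (i-1) hjk
    -- squeeze
    have hL : Tendsto (fun n => betaFn n (d n) (muSeq n (d n) (lam n) (i-1)) /
        betaFn n (d n) (muSeq n (d n) (lam n) 0) *
        (lam n - ((d n : ℝ) - 1) / (n : ℝ))) atTop (𝓝 1) := by
      have h := (hP.div hQ one_ne_zero).mul (hlam1.sub hdd0)
      norm_num at h
      exact h
    have hU : Tendsto (fun n => betaFn n (d n) (muSeq n (d n) (lam n) (i-1)) /
        betaFn n (d n) (muSeq n (d n) (lam n) 0) *
        (muSeq n (d n) (lam n) (i-1) - ((d n : ℝ) - 1) / (n : ℝ))⁻¹) atTop (𝓝 1) := by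
      have h := (hP.div hQ one_ne_zero).mul ((hμj.sub hdd0).inv₀ (by norm_num))
      norm_num at h
      exact h
    apply tendsto_of_tendsto_of_tendsto_of_le_of_le' hL hU
    · -- lower bound
      filter_upwards [hev1, hhalf (i-1) hj, hhalf 0 hk1, hcond (i-1) hjk,
        hcond 0 (by omega)] with n hn hhP hhQ hcj hc0
      have hdle := hd n hn
      set P := betaFn n (d n) (muSeq n (d n) (lam n) (i-1)) with hPd
      set Q := betaFn n (d n) (muSeq n (d n) (lam n) 0) with hQd
      set D := (d n : ℝ) with hDd
      have hD1 : (1:ℝ) ≤ D := by rw [hDd]; exact_mod_cast hdle.1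
      have e0 : muSeq n (d n) (lam n) 0 = lam n := rfl
      have hlam1' : lam n ≤ 1 := le_of_lt (hlam n).2
      have hbl : Q * D ≤ betaDeriv n (d n) (muSeq n (d n) (lam n) 0) :=
        betaDeriv_lower hn hdle.2 hc0 (by rw [e0]; exact hlam1')
      have hbu : betaDeriv n (d n) (muSeq n (d n) (lam n) 0) ≤
          Q * D * (lam n - ((d n : ℝ) - 1) / (n : ℝ))⁻¹ := by
        have := betaDeriv_upper hn hdle.2 hc0
        rw [e0] at this
        exact this
      have hal : P * D ≤ betaDeriv n (d n) (muSeq n (d n) (lam n) (i-1)) := by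
        apply betaDeriv_lower hn hdle.2 hcj
        calc muSeq n (d n) (lam n) (i-1) ≤ lam n :=
            (muSeq_props hn hdle.1 hdle.2 (hlam n).1 (hlam n).2 (i-1)).2.1
          _ ≤ 1 := hlam1'
      have hQp : (0:ℝ) < Q := by linarith
      have hPp : (0:ℝ) < P := by linarith
      have hQD : (0:ℝ) < Q * D := by positivity
      have hbpos : (0:ℝ) < betaDeriv n (d n) (muSeq n (d n) (lam n) 0) :=
        lt_of_lt_of_le hQD hbl
      have hc0' : (0:ℝ) < lam n - ((d n : ℝ) - 1) / (n : ℝ) := by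
        rw [e0] at hc0; linarith
      have h1 : P / Q * (lam n - ((d n : ℝ) - 1) / (n : ℝ)) =
          (P * D) / (Q * D * (lam n - ((d n : ℝ) - 1) / (n : ℝ))⁻¹) :=
        ratio_eq1 (ne_of_gt hQp) (by positivity)
      rw [h1]
      exact div_le_div₀ (le_trans (by positivity) hal) hal hbpos hbu
    · -- upper bound
      filter_upwards [hev1, hhalf (i-1) hj, hhalf 0 hk1, hcond (i-1) hjk,
        hcond 0 (by omega)] with n hn hhP hhQ hcj hc0
      have hdle := hd n hn
      set P := betaFn n (d n) (muSeq n (d n) (lam n) (i-1)) with hPd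
      set Q := betaFn n (d n) (muSeq n (d n) (lam n) 0) with hQd
      set D := (d n : ℝ) with hDd
      have hD1 : (1:ℝ) ≤ D := by rw [hDd]; exact_mod_cast hdle.1
      have e0 : muSeq n (d n) (lam n) 0 = lam n := rfl
      have hlam1' : lam n ≤ 1 := le_of_lt (hlam n).2
      have hbl : Q * D ≤ betaDeriv n (d n) (muSeq n (d n) (lam n) 0) :=
        betaDeriv_lower hn hdle.2 hc0 (by rw [e0]; exact hlam1')
      have hau : betaDeriv n (d n) (muSeq n (d n) (lam n) (i-1)) ≤
          P * D * (muSeq n (d n) (lam n) (i-1) - ((d n : ℝ) - 1) / (n : ℝ))⁻¹ :=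
        betaDeriv_upper hn hdle.2 hcj
      have hQp : (0:ℝ) < Q := by linarith
      have hPp : (0:ℝ) < P := by linarith
      have hQD : (0:ℝ) < Q * D := by positivity
      have hcj' : (0:ℝ) < muSeq n (d n) (lam n) (i-1) - ((d n : ℝ) - 1) / (n : ℝ) := by
        linarith
      have h2 : P / Q * (muSeq n (d n) (lam n) (i-1) - ((d n : ℝ) - 1) / (n : ℝ))⁻¹ =
          (P * D * (muSeq n (d n) (lam n) (i-1) - ((d n : ℝ) - 1) / (n : ℝ))⁻¹) /
            (Q * D) :=
        ratio_eq2 (ne_of_gt hQp) (by positivity)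
      rw [h2]
      exact div_le_div₀ (by positivity) hau hQD hbl
end

section
/- Let (d_n) be integers with 1 ≤ d_n ≤ n and d_n/n^{2/3} → 0 as n → ∞, and let (ε_n) be a sequence in [0,1] with d_n ε_n² → 0. Then sup_{x ∈ [1−ε_n, 1]} | β_n(x)/γ_n(x) − 1 | → 0 and sup_{x ∈ [1−ε_n, 1]} | β'_n(x)/γ'_n(x) − 1 | → 0 as n → ∞. -/
open Filter Topology

private lemma prod_lb (S : Finset ℕ) (f : ℕ → ℝ) (h0 : ∀ i ∈ S, 0 ≤ f i)
    (h1 : ∀ i ∈ S, f i ≤ 1) :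
    1 - ∑ i ∈ S, (1 - f i) ≤ ∏ i ∈ S, f i := by
  classical
  induction S using Finset.induction_on with
  | empty => simp
  | @insert a s ha ih =>
    rw [Finset.prod_insert ha, Finset.sum_insert ha]
    have h0a := h0 a (Finset.mem_insert_self a s)
    have h1a := h1 a (Finset.mem_insert_self a s)
    have ihs := ih (fun i hi => h0 i (Finset.mem_insert_of_mem hi))
      (fun i hi => h1 i (Finset.mem_insert_of_mem hi))
    have hsum : (0:ℝ) ≤ ∑ i ∈ s, (1 - f i) :=
      Finset.sum_nonneg fun i hi => by linarith [h1 i (Finset.mem_insert_of_mem hi)]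
    nlinarith [mul_le_mul_of_nonneg_left ihs h0a]

set_option maxHeartbeats 1000000 in
private lemma main_pt (n D : ℕ) (hn : 1 ≤ n) (hD1 : 1 ≤ D)
    (ε δ : ℝ) (hε0 : 0 ≤ ε) (hε : ε ≤ 1/2)
    (hq : (D:ℝ)/n ≤ 1/4)
    (hA : 3*((D:ℝ)^2*ε/n) + 2*((D:ℝ)/n) < δ)
    (x : ℝ) (hx1 : 1 - ε ≤ x) (hx2 : x ≤ 1) :
    |betaFn n D x / x ^ D - 1| < δ ∧
    |betaDeriv n D x / ((D:ℝ) * x ^ (D-1)) - 1| < δ := by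
  have hN : (0:ℝ) < n := by exact_mod_cast hn
  have hx0 : (1:ℝ)/2 ≤ x := by linarith
  have hxpos : (0:ℝ) < x := by linarith
  have hq0 : (0:ℝ) ≤ (D:ℝ)/n := by positivity
  set q : ℝ := (D:ℝ)/n with hqdef
  have hc : ∀ i ∈ Finset.range D, 0 ≤ (i:ℝ)/n ∧ (i:ℝ)/n ≤ q := by
    intro i hi
    refine ⟨by positivity, ?_⟩
    have hiD : (i:ℝ) ≤ D := by exact_mod_cast (Finset.mem_range.mp hi).le
    rw [hqdef]; gcongr
  have key : ∀ i ∈ Finset.range D,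
      1 - 3*q*ε ≤ ((x - (i:ℝ)/n) / (1 - (i:ℝ)/n)) / x ∧
      ((x - (i:ℝ)/n) / (1 - (i:ℝ)/n)) / x ≤ 1 := by
    intro i hi
    obtain ⟨hc0, hc1⟩ := hc i hi
    set c : ℝ := (i:ℝ)/n with hcdef
    have hc4 : c ≤ 1/4 := le_trans hc1 hq
    have h1c0 : (0:ℝ) < 1 - c := by linarith
    constructor
    · rw [le_div_iff₀ hxpos, le_div_iff₀ h1c0]
      nlinarith [mul_le_mul hc1 (by linarith : 1 - x ≤ ε) (by linarith) hq0,
        mul_le_mul_of_nonneg_left (by nlinarith : (3:ℝ)/8 ≤ x*(1-c)) (mul_nonneg hq0 hε0)]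
    · rw [div_le_one hxpos, div_le_iff₀ h1c0]
      nlinarith
  have hq3 : 3*q*ε ≤ 3/8 := by nlinarith
  have hrnn : ∀ i ∈ Finset.range D, (0:ℝ) ≤ ((x - (i:ℝ)/n) / (1 - (i:ℝ)/n)) / x := by
    intro i hi
    have := (key i hi).1
    linarith
  have hprod : ∀ S ⊆ Finset.range D,
      1 - (S.card:ℝ)*(3*q*ε) ≤ (∏ i ∈ S, ((x - (i:ℝ)/n)/(1 - (i:ℝ)/n))/x) ∧
      (∏ i ∈ S, ((x - (i:ℝ)/n)/(1 - (i:ℝ)/n))/x) ≤ 1 := by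
    intro S hS
    constructor
    · have h := prod_lb S (fun i => ((x - (i:ℝ)/n)/(1 - (i:ℝ)/n))/x)
        (fun i hi => hrnn i (hS hi)) (fun i hi => (key i (hS hi)).2)
      have hsum : ∑ i ∈ S, (1 - ((x - (i:ℝ)/n)/(1 - (i:ℝ)/n))/x) ≤ (S.card:ℝ)*(3*q*ε) := by
        calc ∑ i ∈ S, (1 - ((x - (i:ℝ)/n)/(1 - (i:ℝ)/n))/x) ≤ ∑ _i ∈ S, 3*q*ε :=
              Finset.sum_le_sum fun i hi => by linarith [(key i (hS hi)).1]
          _ = (S.card:ℝ)*(3*q*ε) := by rw [Finset.sum_const, nsmul_eq_mul]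
      linarith
    · exact Finset.prod_le_one (fun i hi => hrnn i (hS hi)) (fun i hi => (key i (hS hi)).2)
  have hDq : (D:ℝ)*(3*q*ε) = 3*((D:ℝ)^2*ε/n) := by rw [hqdef]; ring
  have hδ0 : 0 < δ := lt_of_le_of_lt (by positivity) hA
  constructor
  · -- betaFn part
    have hpos : ∀ i ∈ Finset.range D, (0:ℝ) ≤ (x - (i:ℝ)/n)/(1 - (i:ℝ)/n) := by
      intro i hi
      obtain ⟨hc0, hc1⟩ := hc i hi
      have hc4 : (i:ℝ)/n ≤ 1/4 := le_trans hc1 hq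
      apply div_nonneg <;> linarith
    have hbeta1 : betaFn n D x = ∏ i ∈ Finset.range D, (x - (i:ℝ)/n)/(1 - (i:ℝ)/n) :=
      Finset.prod_congr rfl fun i hi => max_eq_left (hpos i hi)
    have hsplit : ∏ i ∈ Finset.range D, ((x - (i:ℝ)/n)/(1 - (i:ℝ)/n))/x
        = (∏ i ∈ Finset.range D, (x - (i:ℝ)/n)/(1 - (i:ℝ)/n)) / x ^ D := by
      rw [Finset.prod_div_distrib, Finset.prod_const, Finset.card_range]
    have hbeta : betaFn n D x / x ^ D = ∏ i ∈ Finset.range D, ((x - (i:ℝ)/n)/(1 - (i:ℝ)/n))/x := by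
      rw [hbeta1, hsplit]
    obtain ⟨hlow, hup⟩ := hprod (Finset.range D) (le_refl _)
    rw [Finset.card_range] at hlow
    rw [hbeta, abs_lt]
    constructor <;> nlinarith
  · -- betaDeriv part
    have hDr : (0:ℝ) < D := by exact_mod_cast hD1
    have hcond : ((D:ℝ) - 1)/n < x := by
      have h1 : ((D:ℝ)-1)/n ≤ (D:ℝ)/n := by gcongr; linarith
      calc ((D:ℝ)-1)/n ≤ (D:ℝ)/n := h1
        _ ≤ 1/4 := hq
        _ < x := by linarith
    have hxpow : (0:ℝ) < x ^ (D-1) := pow_pos hxpos _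
    have hterm : ∀ j ∈ Finset.range D,
        (1 - (j:ℝ)/n)⁻¹ * ∏ i ∈ (Finset.range D).erase j, (x - (i:ℝ)/n)/(1 - (i:ℝ)/n)
        = ((1 - (j:ℝ)/n)⁻¹ * ∏ i ∈ (Finset.range D).erase j, ((x - (i:ℝ)/n)/(1 - (i:ℝ)/n))/x) * x^(D-1) := by
      intro j hj
      have hcard : ((Finset.range D).erase j).card = D - 1 := by
        rw [Finset.card_erase_of_mem hj, Finset.card_range]
      have hsplit : ∏ i ∈ (Finset.range D).erase j, ((x - (i:ℝ)/n)/(1 - (i:ℝ)/n))/x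
          = (∏ i ∈ (Finset.range D).erase j, (x - (i:ℝ)/n)/(1 - (i:ℝ)/n)) / x ^ (D-1) := by
        rw [Finset.prod_div_distrib, Finset.prod_const, hcard]
      rw [hsplit, ← mul_div_assoc, div_mul_cancel₀ _ hxpow.ne']
    have hu : ∀ j ∈ Finset.range D,
        1 - (D:ℝ)*(3*q*ε) ≤ (1 - (j:ℝ)/n)⁻¹ * ∏ i ∈ (Finset.range D).erase j, ((x - (i:ℝ)/n)/(1 - (i:ℝ)/n))/x ∧
        (1 - (j:ℝ)/n)⁻¹ * ∏ i ∈ (Finset.range D).erase j, ((x - (i:ℝ)/n)/(1 - (i:ℝ)/n))/x ≤ 1 + 2*q := by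
      intro j hj
      obtain ⟨hc0, hc1⟩ := hc j hj
      have hc4 : (j:ℝ)/n ≤ 1/4 := le_trans hc1 hq
      have h1c0 : (0:ℝ) < 1 - (j:ℝ)/n := by linarith
      have hinv1 : 1 ≤ (1 - (j:ℝ)/n)⁻¹ := by
        rw [one_le_inv_iff₀]
        exact ⟨h1c0, by linarith⟩
      have hinv2 : (1 - (j:ℝ)/n)⁻¹ ≤ 1 + 2*q := by
        rw [inv_eq_one_div, div_le_iff₀ h1c0]
        nlinarith
      obtain ⟨hP1, hP2⟩ := hprod _ (Finset.erase_subset j (Finset.range D))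
      have hPnn : (0:ℝ) ≤ ∏ i ∈ (Finset.range D).erase j, ((x - (i:ℝ)/n)/(1 - (i:ℝ)/n))/x :=
        Finset.prod_nonneg fun i hi => hrnn i (Finset.erase_subset j (Finset.range D) hi)
      have hcard : (((Finset.range D).erase j).card : ℝ) ≤ (D:ℝ) := by
        rw [Finset.card_erase_of_mem hj, Finset.card_range]
        exact_mod_cast Nat.sub_le D 1
      constructor
      · have h1 : 1 - (D:ℝ)*(3*q*ε) ≤ ∏ i ∈ (Finset.range D).erase j, ((x - (i:ℝ)/n)/(1 - (i:ℝ)/n))/x := by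
          have : (((Finset.range D).erase j).card:ℝ)*(3*q*ε) ≤ (D:ℝ)*(3*q*ε) := by
            apply mul_le_mul_of_nonneg_right hcard
            positivity
          linarith
        calc 1 - (D:ℝ)*(3*q*ε) ≤ 1 * ∏ i ∈ (Finset.range D).erase j, ((x - (i:ℝ)/n)/(1 - (i:ℝ)/n))/x := by
              rw [one_mul]; exact h1
          _ ≤ _ := mul_le_mul_of_nonneg_right hinv1 hPnn
      · calc (1 - (j:ℝ)/n)⁻¹ * ∏ i ∈ (Finset.range D).erase j, ((x - (i:ℝ)/n)/(1 - (i:ℝ)/n))/x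
            ≤ (1 + 2*q) * 1 := mul_le_mul hinv2 hP2 hPnn (by nlinarith)
          _ = 1 + 2*q := mul_one _
    simp only [betaDeriv, if_pos hcond]
    rw [Finset.sum_congr rfl hterm, ← Finset.sum_mul]
    have hratio : (∑ j ∈ Finset.range D, (1 - (j:ℝ)/n)⁻¹ * ∏ i ∈ (Finset.range D).erase j, ((x - (i:ℝ)/n)/(1 - (i:ℝ)/n))/x) * x^(D-1) / ((D:ℝ) * x^(D-1))
        = (∑ j ∈ Finset.range D, (1 - (j:ℝ)/n)⁻¹ * ∏ i ∈ (Finset.range D).erase j, ((x - (i:ℝ)/n)/(1 - (i:ℝ)/n))/x) / D := by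
      rw [mul_comm (D:ℝ) (x^(D-1)), ← div_div, mul_div_assoc, div_self hxpow.ne', mul_one]
    rw [hratio]
    have hsl : (D:ℝ)*(1 - (D:ℝ)*(3*q*ε)) ≤ ∑ j ∈ Finset.range D, (1 - (j:ℝ)/n)⁻¹ * ∏ i ∈ (Finset.range D).erase j, ((x - (i:ℝ)/n)/(1 - (i:ℝ)/n))/x := by
      have h := Finset.card_nsmul_le_sum (Finset.range D)
        (fun j => (1 - (j:ℝ)/n)⁻¹ * ∏ i ∈ (Finset.range D).erase j, ((x - (i:ℝ)/n)/(1 - (i:ℝ)/n))/x)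
        _ (fun j hj => (hu j hj).1)
      rw [Finset.card_range, nsmul_eq_mul] at h
      exact h
    have hsu : (∑ j ∈ Finset.range D, (1 - (j:ℝ)/n)⁻¹ * ∏ i ∈ (Finset.range D).erase j, ((x - (i:ℝ)/n)/(1 - (i:ℝ)/n))/x) ≤ (D:ℝ)*(1 + 2*q) := by
      have h := Finset.sum_le_card_nsmul (Finset.range D)
        (fun j => (1 - (j:ℝ)/n)⁻¹ * ∏ i ∈ (Finset.range D).erase j, ((x - (i:ℝ)/n)/(1 - (i:ℝ)/n))/x)
        _ (fun j hj => (hu j hj).2)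
      rw [Finset.card_range, nsmul_eq_mul] at h
      exact h
    rw [abs_lt]
    have hd1 : (1 - (D:ℝ)*(3*q*ε)) ≤ (∑ j ∈ Finset.range D, (1 - (j:ℝ)/n)⁻¹ * ∏ i ∈ (Finset.range D).erase j, ((x - (i:ℝ)/n)/(1 - (i:ℝ)/n))/x) / D := by
      rw [le_div_iff₀ hDr]
      linarith
    have hd2 : (∑ j ∈ Finset.range D, (1 - (j:ℝ)/n)⁻¹ * ∏ i ∈ (Finset.range D).erase j, ((x - (i:ℝ)/n)/(1 - (i:ℝ)/n))/x) / D ≤ 1 + 2*q := by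
      rw [div_le_iff₀ hDr]
      linarith
    have hnn : (0:ℝ) ≤ 3*((D:ℝ)^2*ε/n) := by positivity
    exact ⟨by linarith, by linarith⟩

/-- Lemma 5.7: if `d_n/n^{2/3} → 0` and `ε_n ∈ [0,1]` with `d_n ε_n² → 0`, then
`sup_{x ∈ [1−ε_n,1]} |β_n/γ_n − 1| → 0` and `sup_{x ∈ [1−ε_n,1]} |β'_n/γ'_n − 1| → 0`,
with `γ_n(x) = x^{d_n}` and `γ'_n(x) = d_n x^{d_n−1}`. -/
theorem stmt10 (d : ℕ → ℕ) (hd : ∀ n : ℕ, 1 ≤ n → 1 ≤ d n ∧ d n ≤ n)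
    (hdn : Tendsto (fun n => (d n : ℝ) / (n : ℝ) ^ ((2 : ℝ) / 3)) atTop (𝓝 0))
    (eps : ℕ → ℝ) (heps : ∀ n, eps n ∈ Set.Icc (0 : ℝ) 1)
    (heps2 : Tendsto (fun n => (d n : ℝ) * (eps n) ^ 2) atTop (𝓝 0)) :
    ∀ δ > 0, ∀ᶠ n in atTop, ∀ x ∈ Set.Icc (1 - eps n) 1,
      |betaFn n (d n) x / x ^ (d n) - 1| < δ ∧
      |betaDeriv n (d n) x / ((d n : ℝ) * x ^ (d n - 1)) - 1| < δ := by
  intro δ hδ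
  have hepsnn : ∀ n, 0 ≤ eps n := fun n => (heps n).1
  -- d/n → 0
  have hle : ∀ᶠ n : ℕ in atTop, (d n : ℝ)/n ≤ (d n : ℝ)/(n:ℝ)^((2:ℝ)/3) := by
    filter_upwards [eventually_ge_atTop 1] with n hn
    have h1 : (1:ℝ) ≤ n := by exact_mod_cast hn
    have h2 : (n:ℝ) ^ ((2:ℝ)/3) ≤ n := by
      calc (n:ℝ) ^ ((2:ℝ)/3) ≤ (n:ℝ) ^ (1:ℝ) :=
            Real.rpow_le_rpow_of_exponent_le h1 (by norm_num)
        _ = n := Real.rpow_one n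
    gcongr
  have hg : Tendsto (fun n => (d n : ℝ) / n) atTop (𝓝 0) :=
    squeeze_zero' (.of_forall fun n => by positivity) hle hdn
  -- d²ε/n → 0
  have hf2 : Tendsto (fun n => ((d n:ℝ)^2 * eps n / n)^2) atTop (𝓝 0) := by
    have h := (hdn.pow 3).mul heps2
    rw [zero_pow (by norm_num : (3:ℕ) ≠ 0), zero_mul] at h
    apply h.congr'
    filter_upwards [eventually_ge_atTop 1] with n hn
    have hn0 : (0:ℝ) < n := by exact_mod_cast hn
    have h23 : ((n:ℝ) ^ ((2:ℝ)/3))^(3:ℕ) = (n:ℝ)^(2:ℕ) := by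
      rw [← Real.rpow_natCast ((n:ℝ)^((2:ℝ)/3)) 3, ← Real.rpow_mul hn0.le,
        ← Real.rpow_natCast (n:ℝ) 2]
      norm_num
    have hne : ((n:ℝ) ^ ((2:ℝ)/3)) ≠ 0 := by positivity
    field_simp
    rw [h23]; ring
  have hf : Tendsto (fun n => (d n:ℝ)^2 * eps n / n) atTop (𝓝 0) := by
    have h := (Real.continuous_sqrt.tendsto 0).comp hf2
    rw [Real.sqrt_zero] at h
    apply h.congr
    intro n
    exact Real.sqrt_sq (div_nonneg (mul_nonneg (sq_nonneg _) (hepsnn n)) (Nat.cast_nonneg n))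
  -- combined bound
  have hsum : Tendsto (fun n => 3*((d n:ℝ)^2 * eps n / n) + 2*((d n:ℝ)/n)) atTop (𝓝 0) := by
    have h := (hf.const_mul 3).add (hg.const_mul 2)
    simpa using h
  have hA : ∀ᶠ n in atTop, 3*((d n:ℝ)^2 * eps n / n) + 2*((d n:ℝ)/n) < δ :=
    hsum.eventually_lt_const hδ
  have hq : ∀ᶠ n in atTop, (d n:ℝ)/n ≤ 1/4 :=
    hg.eventually_le_const (by norm_num : (0:ℝ) < 1/4)
  have hε : ∀ᶠ n in atTop, eps n ≤ 1/2 := by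
    filter_upwards [heps2.eventually_lt_const (by norm_num : (0:ℝ) < 1/4),
      eventually_ge_atTop 1] with n h hn
    have hd1 : (1:ℝ) ≤ (d n : ℝ) := by exact_mod_cast (hd n hn).1
    nlinarith [hepsnn n, sq_nonneg (eps n)]
  filter_upwards [hA, hq, hε, eventually_ge_atTop 1] with n hAn hqn hεn hn
  intro x hx
  exact main_pt n (d n) hn (hd n hn).1 (eps n) δ (hepsnn n) hεn hqn hAn x hx.1 hx.2
end

section
/- Let (d_n) be integers with 1 ≤ d_n ≤ n and d_n → ∞, and set ε_n := 2 (log d_n)/d_n. Then sup_{x ∈ [0, 1−ε_n]} β_n(x) → 0 as n → ∞. If moreover limsup_{n→∞} d_n/n < 1, then also sup_{x ∈ [0, 1−ε_n]} β'_n(x) → 0 as n → ∞. -/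
open Filter Topology

lemma aux_exp_neg_two_log (d : ℕ) (hd1 : 1 ≤ d) :
    Real.exp (-(2 * Real.log d)) = 1 / ((d : ℝ) * d) := by
  have hdpos : (0:ℝ) < d := by exact_mod_cast hd1
  rw [show -(2 * Real.log (d:ℝ)) = (-Real.log d) + (-Real.log d) by ring, Real.exp_add,
    Real.exp_neg, Real.exp_log hdpos]
  rw [one_div, mul_inv]

lemma aux_pow_le_exp (ε : ℝ) (hε : 1 - ε ≥ 0) (k : ℕ) :
    (1 - ε) ^ k ≤ Real.exp ((k : ℝ) * (-ε)) := by
  rw [Real.exp_nat_mul]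
  refine pow_le_pow_left₀ hε ?_ k
  have := Real.add_one_le_exp (-ε)
  linarith

lemma key1 (n d : ℕ) (hn : 1 ≤ n) (hd1 : 1 ≤ d) (hdn : d ≤ n) (x : ℝ)
    (hx : x ∈ Set.Icc (0 : ℝ) (1 - 2 * Real.log d / (d : ℝ))) :
    |betaFn n d x| ≤ 1 / (d : ℝ) := by
  obtain ⟨hx0, hx1⟩ := hx
  have hdpos : (0:ℝ) < d := by exact_mod_cast hd1
  have hnpos : (0:ℝ) < n := by exact_mod_cast hn
  set ε : ℝ := 2 * Real.log d / d with hεdef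
  have hεnn : 0 ≤ ε := by
    have := Real.log_nonneg (show (1:ℝ) ≤ d by exact_mod_cast hd1)
    positivity
  have hεle : 0 ≤ 1 - ε := le_trans hx0 hx1
  have hx1' : x ≤ 1 := by linarith
  have hβ0 : 0 ≤ betaFn n d x := Finset.prod_nonneg fun i _ => le_max_right _ _
  rw [abs_of_nonneg hβ0]
  have hfac : ∀ i ∈ Finset.range d,
      max ((x - (i : ℝ) / n) / (1 - (i : ℝ) / n)) 0 ≤ x := by
    intro i hi
    have hi' : (i : ℝ) < n := by
      exact_mod_cast lt_of_lt_of_le (Finset.mem_range.mp hi) hdn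
    have ha0 : 0 ≤ (i : ℝ) / n := by positivity
    have ha1 : (i : ℝ) / n < 1 := (div_lt_one hnpos).mpr hi'
    refine max_le ?_ hx0
    rw [div_le_iff₀ (by linarith)]
    nlinarith [mul_nonneg ha0 (sub_nonneg.mpr hx1')]
  calc betaFn n d x ≤ ∏ _i ∈ Finset.range d, x :=
        Finset.prod_le_prod (fun i _ => le_max_right _ _) hfac
    _ = x ^ d := by rw [Finset.prod_const, Finset.card_range]
    _ ≤ (1 - ε) ^ d := pow_le_pow_left₀ hx0 hx1 d
    _ ≤ Real.exp ((d : ℝ) * (-ε)) := aux_pow_le_exp ε hεle d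
    _ = 1 / ((d:ℝ) * d) := by
        rw [show (d:ℝ) * (-ε) = -(2 * Real.log d) by rw [hεdef]; field_simp <;> ring]
        exact aux_exp_neg_two_log d hd1
    _ ≤ 1 / (d : ℝ) := by
        apply one_div_le_one_div_of_le hdpos
        nlinarith [show (1:ℝ) ≤ d from by exact_mod_cast hd1]

lemma key2 (n d : ℕ) (hn : 1 ≤ n) (hd1 : 1 ≤ d) (hdn : d ≤ n) (c : ℝ) (hc : c < 1)
    (hdc : (d : ℝ) / n < c) (x : ℝ)
    (hx : x ∈ Set.Icc (0 : ℝ) (1 - 2 * Real.log d / (d : ℝ))) :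
    |betaDeriv n d x| ≤ (1 - c)⁻¹ * Real.exp 2 / d := by
  obtain ⟨hx0, hx1⟩ := hx
  have hdpos : (0:ℝ) < d := by exact_mod_cast hd1
  have hnpos : (0:ℝ) < n := by exact_mod_cast hn
  have h1c : (0:ℝ) < 1 - c := by linarith
  set ε : ℝ := 2 * Real.log d / d with hεdef
  have hεnn : 0 ≤ ε := by
    have := Real.log_nonneg (show (1:ℝ) ≤ d by exact_mod_cast hd1)
    positivity
  have hεle : 0 ≤ 1 - ε := le_trans hx0 hx1
  have hε2 : ε ≤ 2 := by
    rw [hεdef, div_le_iff₀ hdpos]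
    have := Real.log_le_sub_one_of_pos hdpos
    nlinarith
  have hx1' : x ≤ 1 := by linarith
  unfold betaDeriv
  split_ifs with hlt
  · -- each index bound
    have hile : ∀ i : ℕ, i ∈ Finset.range d → (i : ℝ) / n ≤ ((d:ℝ) - 1) / n := by
      intro i hi
      apply div_le_div_of_nonneg_right ?_ hnpos.le
      have : (i:ℝ) + 1 ≤ d := by exact_mod_cast Finset.mem_range.mp hi
      linarith
    have hxpos : ∀ i : ℕ, i ∈ Finset.range d → 0 ≤ x - (i:ℝ)/n := by
      intro i hi
      have := hile i hi
      linarith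
    have hone : ∀ i : ℕ, i ∈ Finset.range d → 1 - c ≤ 1 - (i:ℝ)/n := by
      intro i hi
      have h1 : (i:ℝ)/n ≤ (d:ℝ)/n := by
        apply div_le_div_of_nonneg_right ?_ hnpos.le
        exact_mod_cast (Finset.mem_range.mp hi).le
      linarith
    have hfacnn : ∀ i : ℕ, i ∈ Finset.range d → 0 ≤ (x - (i:ℝ)/n) / (1 - (i:ℝ)/n) := by
      intro i hi
      exact div_nonneg (hxpos i hi) (by linarith [hone i hi])
    have hfacle : ∀ i : ℕ, i ∈ Finset.range d → (x - (i:ℝ)/n) / (1 - (i:ℝ)/n) ≤ x := by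
      intro i hi
      have h1 := hone i hi
      have ha0 : 0 ≤ (i:ℝ)/n := by positivity
      rw [div_le_iff₀ (by linarith)]
      nlinarith [mul_nonneg ha0 (sub_nonneg.mpr hx1')]
    have htermnn : ∀ j ∈ Finset.range d, 0 ≤ (1 - (j : ℝ) / n)⁻¹ *
        ∏ i ∈ (Finset.range d).erase j, (x - (i : ℝ) / n) / (1 - (i : ℝ) / n) := by
      intro j hj
      refine mul_nonneg (inv_nonneg.mpr (by linarith [hone j hj])) ?_
      exact Finset.prod_nonneg fun i hi => hfacnn i (Finset.mem_of_mem_erase hi)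
    rw [abs_of_nonneg (Finset.sum_nonneg htermnn)]
    have hterm : ∀ j ∈ Finset.range d, (1 - (j : ℝ) / n)⁻¹ *
        ∏ i ∈ (Finset.range d).erase j, (x - (i : ℝ) / n) / (1 - (i : ℝ) / n)
        ≤ (1 - c)⁻¹ * x ^ (d - 1) := by
      intro j hj
      have hprod : ∏ i ∈ (Finset.range d).erase j, (x - (i : ℝ) / n) / (1 - (i : ℝ) / n)
          ≤ x ^ (d - 1) := by
        calc ∏ i ∈ (Finset.range d).erase j, (x - (i : ℝ) / n) / (1 - (i : ℝ) / n)
            ≤ ∏ _i ∈ (Finset.range d).erase j, x :=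
              Finset.prod_le_prod (fun i hi => hfacnn i (Finset.mem_of_mem_erase hi))
                (fun i hi => hfacle i (Finset.mem_of_mem_erase hi))
          _ = x ^ (d - 1) := by
              rw [Finset.prod_const, Finset.card_erase_of_mem hj, Finset.card_range]
      have hinv : (1 - (j : ℝ) / n)⁻¹ ≤ (1 - c)⁻¹ := by
        rw [← one_div, ← one_div (1 - c)]
        exact one_div_le_one_div_of_le h1c (hone j hj)
      refine mul_le_mul hinv hprod ?_ (by positivity)
      exact Finset.prod_nonneg fun i hi => hfacnn i (Finset.mem_of_mem_erase hi)
    calc (∑ j ∈ Finset.range d, (1 - (j : ℝ) / n)⁻¹ *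
          ∏ i ∈ (Finset.range d).erase j, (x - (i : ℝ) / n) / (1 - (i : ℝ) / n))
        ≤ ∑ _j ∈ Finset.range d, (1 - c)⁻¹ * x ^ (d - 1) := Finset.sum_le_sum hterm
      _ = (d : ℝ) * ((1 - c)⁻¹ * x ^ (d - 1)) := by
          rw [Finset.sum_const, Finset.card_range, nsmul_eq_mul]
      _ ≤ (1 - c)⁻¹ * Real.exp 2 / d := by
          have hcast : ((d - 1 : ℕ) : ℝ) = (d : ℝ) - 1 := by
            rw [Nat.cast_sub hd1]; norm_num
          have hxpow : x ^ (d - 1) ≤ Real.exp (((d:ℝ) - 1) * (-ε)) := by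
            calc x ^ (d - 1) ≤ (1 - ε) ^ (d - 1) := pow_le_pow_left₀ hx0 hx1 _
              _ ≤ Real.exp (((d - 1 : ℕ) : ℝ) * (-ε)) := aux_pow_le_exp ε hεle _
              _ = Real.exp (((d:ℝ) - 1) * (-ε)) := by rw [hcast]
          have hexp : Real.exp (((d:ℝ) - 1) * (-ε)) ≤ 1 / ((d:ℝ) * d) * Real.exp 2 := by
            have : ((d:ℝ) - 1) * (-ε) = -(2 * Real.log d) + ε := by
              rw [hεdef]; field_simp <;> ring
            rw [this, Real.exp_add, aux_exp_neg_two_log d hd1]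
            have h1 : Real.exp ε ≤ Real.exp 2 := Real.exp_le_exp.mpr hε2
            have h2 : (0:ℝ) ≤ 1 / ((d:ℝ) * d) := by positivity
            exact mul_le_mul_of_nonneg_left h1 h2
          have hxpnn : 0 ≤ x ^ (d - 1) := pow_nonneg hx0 _
          have hc0 : (0:ℝ) ≤ (1 - c)⁻¹ := by positivity
          have hstep : x ^ (d - 1) ≤ 1 / ((d:ℝ) * d) * Real.exp 2 := hxpow.trans hexp
          calc (d : ℝ) * ((1 - c)⁻¹ * x ^ (d - 1))
              ≤ (d : ℝ) * ((1 - c)⁻¹ * (1 / ((d:ℝ) * d) * Real.exp 2)) := by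
                refine mul_le_mul_of_nonneg_left ?_ hdpos.le
                exact mul_le_mul_of_nonneg_left hstep hc0
            _ = (1 - c)⁻¹ * Real.exp 2 / d := by field_simp
  · simp only [abs_zero]
    positivity

/-- Lemma 5.8: if `d_n → ∞` and `ε_n = 2 log d_n / d_n`, then
`sup_{x ∈ [0,1−ε_n]} β_n(x) → 0`; if moreover `limsup d_n/n < 1`, then also
`sup_{x ∈ [0,1−ε_n]} β'_n(x) → 0`. -/
theorem stmt11 (d : ℕ → ℕ) (hd : ∀ n : ℕ, 1 ≤ n → 1 ≤ d n ∧ d n ≤ n)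
    (hdtop : Tendsto d atTop atTop) :
    (∀ δ > 0, ∀ᶠ n in atTop,
      ∀ x ∈ Set.Icc (0 : ℝ) (1 - 2 * Real.log (d n) / (d n : ℝ)),
        |betaFn n (d n) x| < δ) ∧
    (Filter.limsup (fun n => (d n : ℝ) / (n : ℝ)) atTop < 1 →
      ∀ δ > 0, ∀ᶠ n in atTop,
        ∀ x ∈ Set.Icc (0 : ℝ) (1 - 2 * Real.log (d n) / (d n : ℝ)),
          |betaDeriv n (d n) x| < δ) := by
  constructor
  · intro δ hδ
    filter_upwards [eventually_ge_atTop 1,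
      hdtop.eventually_gt_atTop ⌈(1:ℝ)/δ⌉₊] with n hn1 hdn
    intro x hx
    obtain ⟨hd1, hdn'⟩ := hd n hn1
    refine lt_of_le_of_lt (key1 n (d n) hn1 hd1 hdn' x hx) ?_
    have hdpos : (0:ℝ) < d n := by exact_mod_cast hd1
    have h1 : (1:ℝ)/δ < d n := by
      calc (1:ℝ)/δ ≤ ⌈(1:ℝ)/δ⌉₊ := Nat.le_ceil _
        _ < d n := by exact_mod_cast hdn
    rw [div_lt_iff₀ hdpos]
    rw [div_lt_iff₀ hδ] at h1
    nlinarith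
  · intro hsup δ hδ
    set L := Filter.limsup (fun n => (d n : ℝ) / (n : ℝ)) atTop with hL
    set c : ℝ := (L + 1) / 2 with hcdef
    have hc1 : c < 1 := by rw [hcdef]; linarith
    have hLc : L < c := by rw [hcdef]; linarith
    have hbdd : IsBoundedUnder (· ≤ ·) atTop (fun n => (d n : ℝ) / (n : ℝ)) := by
      refine ⟨1, ?_⟩
      rw [eventually_map]
      filter_upwards [eventually_ge_atTop 1] with n hn
      have ⟨_, h2⟩ := hd n hn
      have hnpos : (0:ℝ) < n := by exact_mod_cast hn
      rw [div_le_one hnpos]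
      exact_mod_cast h2
    have hev : ∀ᶠ n in atTop, (d n : ℝ) / n < c :=
      Filter.eventually_lt_of_limsup_lt hLc hbdd
    have hKpos : (0:ℝ) < (1 - c)⁻¹ * Real.exp 2 := by
      have : (0:ℝ) < 1 - c := by linarith
      positivity
    filter_upwards [eventually_ge_atTop 1, hev,
      hdtop.eventually_gt_atTop ⌈(1 - c)⁻¹ * Real.exp 2 / δ⌉₊] with n hn1 hnc hdn
    intro x hx
    obtain ⟨hd1, hdn'⟩ := hd n hn1
    refine lt_of_le_of_lt (key2 n (d n) hn1 hd1 hdn' c hc1 hnc x hx) ?_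
    have hdpos : (0:ℝ) < d n := by exact_mod_cast hd1
    have h1 : (1 - c)⁻¹ * Real.exp 2 / δ < d n := by
      calc (1 - c)⁻¹ * Real.exp 2 / δ ≤ ⌈(1 - c)⁻¹ * Real.exp 2 / δ⌉₊ := Nat.le_ceil _
        _ < d n := by exact_mod_cast hdn
    rw [div_lt_iff₀ hdpos]
    rw [div_lt_iff₀ hδ] at h1
    nlinarith
end

section
/- Let (d_n) be integers with 1 ≤ d_n ≤ n, d_n → ∞ and d_n/n^{2/3} → 0. Let (α_n) be a real sequence with d_n α_n²/n → 0, and set λ_n := 1 − ( (log d_n)/d_n + α_n/√n ). Define t_{n,1}(z) := λ_n ∫_{[0,z]} β'_n(λ_n + y/√n) dy for z ∈ ℝ (with ∫_{[0,z]} := −∫_{[z,0]} when z < 0). Then for every L > 0, sup_{0 < |z| ≤ L} | ( exp((d_n/√n)(z − α_n)) − exp(−(d_n/√n) α_n) ) / ( t_{n,1}(z) · d_n/√n ) − 1 | → 0 as n → ∞. -/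
open Filter Topology

lemma log_approx {t : ℝ} (ht : |t| ≤ 1/2) : |Real.log (1+t) - t| ≤ 2*t^2 := by
  have h1 : |(-t : ℝ)| < 1 := by rw [abs_neg]; linarith
  have h2 := Real.abs_log_sub_add_sum_range_le h1 1
  simp [Finset.sum_range_one] at h2
  rw [neg_add_eq_sub] at h2
  have h4 : t^2 / (1 - |t|) ≤ 2*t^2 := by
    rw [div_le_iff₀ (by linarith [abs_nonneg t])]
    nlinarith [abs_nonneg t, sq_nonneg t]
  calc |Real.log (1+t) - t| = |Real.log (1 + t) - t| := rfl
    _ ≤ t^2/(1-|t|) := h2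
    _ ≤ 2*t^2 := h4

lemma cube_half {ε₀ : ℝ} (hε : 0 < ε₀) (h1 : ε₀ ≤ 1/6) : (1/2:ℝ) ≤ (1-ε₀)^3 := by
  nlinarith [mul_nonneg hε.le hε.le, mul_nonneg (mul_nonneg hε.le hε.le) hε.le, sq_nonneg (1-ε₀), sq_nonneg ε₀]

lemma final_alg {Nz Dz δ ε₀ : ℝ} (hN : 0 < Nz) (hε : 0 < ε₀) (h1 : ε₀ ≤ 1/6)
    (h2 : 15*ε₀ ≤ δ) (hlo : (1-ε₀)^3*Nz ≤ Dz) (hhi : Dz ≤ (1+ε₀)^3*Nz) :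
    |Nz/Dz - 1| < δ := by
  have hδ : 0 < δ := by linarith
  have e2 : (1/2)*Nz ≤ Dz := by
    refine le_trans ?_ hlo
    nlinarith [cube_half hε h1]
  have hDz : 0 < Dz := by linarith
  have e1 : Nz - Dz ≥ -(7*ε₀)*Nz := by nlinarith [mul_nonneg (mul_nonneg hε.le hε.le) hN.le, mul_nonneg hε.le hN.le]
  have e3 : Dz - Nz ≤ 7*ε₀*Nz := by nlinarith [mul_nonneg (mul_nonneg hε.le hε.le) hN.le, mul_nonneg hε.le hN.le]
  have k1 := mul_le_mul_of_nonneg_left e2 hδ.le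
  have k2 := mul_le_mul_of_nonneg_right h2 hN.le
  rw [abs_lt]
  constructor
  · have h3 : (1 - δ) * Dz < Nz := by nlinarith
    have := (lt_div_iff₀ hDz).2 h3
    linarith
  · have h4 : Nz < (1 + δ) * Dz := by nlinarith
    have := (div_lt_iff₀ hDz).2 h4
    linarith

set_option maxHeartbeats 2000000 in
lemma pointwise (n dd : ℕ) (lam α L ε₀ sm y : ℝ)
    (hn : 1 ≤ n) (hd1 : 1 ≤ dd)
    (hε₀ : 0 < ε₀) (hε₁ : ε₀ ≤ 1/6)
    (hlamdef : lam = 1 - (Real.log dd / dd + α / Real.sqrt n))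
    (hy : |y| ≤ L)
    (hsmdef : sm = Real.log dd / dd + (L + |α|) / Real.sqrt n)
    (hDN : (dd:ℝ)/(n:ℝ) ≤ 1/8)
    (hC : 2*((dd:ℝ)/(n:ℝ) + sm) ≤ ε₀)
    (hH : 8*(dd:ℝ)*sm^2 + 2*sm*(dd:ℝ)^2/(n:ℝ) ≤ ε₀)
    (hHe : Real.exp (8*(dd:ℝ)*sm^2 + 2*sm*(dd:ℝ)^2/(n:ℝ)) ≤ 1+ε₀) :
    ((dd:ℝ)-1)/(n:ℝ) < lam + y/Real.sqrt n ∧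
    (1-ε₀)^3 * ((dd:ℝ)/Real.sqrt n * Real.exp ((dd:ℝ)/Real.sqrt n * (y - α))) ≤
      lam * ((dd:ℝ)/Real.sqrt n) * betaDeriv n dd (lam + y/Real.sqrt n) ∧
    lam * ((dd:ℝ)/Real.sqrt n) * betaDeriv n dd (lam + y/Real.sqrt n) ≤
      (1+ε₀)^3 * ((dd:ℝ)/Real.sqrt n * Real.exp ((dd:ℝ)/Real.sqrt n * (y - α))) := by
  have hN1 : (1:ℝ) ≤ (n:ℝ) := by exact_mod_cast hn
  have hNpos : (0:ℝ) < (n:ℝ) := by linarith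
  have hD1 : (1:ℝ) ≤ (dd:ℝ) := by exact_mod_cast hd1
  have hDpos : (0:ℝ) < (dd:ℝ) := by linarith
  have hrnpos : 0 < Real.sqrt n := Real.sqrt_pos.2 hNpos
  have hlog0 : 0 ≤ Real.log dd := Real.log_nonneg hD1
  have hL0 : 0 ≤ L := le_trans (abs_nonneg y) hy
  have hDN0 : 0 ≤ (dd:ℝ)/(n:ℝ) := by positivity
  have hsm0 : 0 ≤ sm := by rw [hsmdef]; positivity
  have hsm12 : sm ≤ 1/12 := by linarith
  obtain ⟨s, hs⟩ : ∃ s : ℝ, s = -(Real.log dd/dd) + (y - α)/Real.sqrt n := ⟨_, rfl⟩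
  have hx : lam + y/Real.sqrt n = 1 + s := by rw [hlamdef, hs]; ring
  have hsbound : |s| ≤ sm := by
    have h1 : |(y - α)/Real.sqrt n| ≤ (L + |α|)/Real.sqrt n := by
      rw [abs_div, abs_of_pos hrnpos]
      have h0 : |y - α| ≤ L + |α| := by
        calc |y - α| ≤ |y| + |α| := abs_sub y α
          _ ≤ L + |α| := by linarith
      gcongr
    rw [hs]
    calc |(-(Real.log dd/dd)) + (y-α)/Real.sqrt n| ≤ |(-(Real.log dd/dd))| + |(y-α)/Real.sqrt n| := abs_add_le _ _
      _ ≤ Real.log dd/dd + (L+|α|)/Real.sqrt n := by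
          rw [abs_neg, abs_of_nonneg (by positivity)]; linarith
      _ = sm := hsmdef.symm
  have hsabs : |s| ≤ 1/12 := hsbound.trans hsm12
  have hsl := (abs_le.1 hsbound).1
  have hsu := (abs_le.1 hsbound).2
  -- basic facts about i/N
  have hiN : ∀ i ∈ Finset.range dd, 0 ≤ (i:ℝ)/(n:ℝ) ∧ (i:ℝ)/(n:ℝ) ≤ (dd:ℝ)/(n:ℝ) := by
    intro i hi
    refine ⟨by positivity, ?_⟩
    have : (i:ℝ) ≤ (dd:ℝ) := by exact_mod_cast (Finset.mem_range.1 hi).le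
    gcongr
  -- the if-condition
  have hcond : ((dd:ℝ)-1)/(n:ℝ) < lam + y/Real.sqrt n := by
    rw [hx]
    have h1 : ((dd:ℝ)-1)/(n:ℝ) ≤ (dd:ℝ)/(n:ℝ) := by gcongr ?_ / ?_ <;> linarith
    linarith [(abs_le.1 hsabs).1]
  -- factor positivity
  have hfpos : ∀ i ∈ Finset.range dd,
      0 < ((lam + y/Real.sqrt n) - (i:ℝ)/(n:ℝ))/(1 - (i:ℝ)/(n:ℝ)) := by
    intro i hi
    obtain ⟨hi0, hi1⟩ := hiN i hi
    have hden : 0 < 1 - (i:ℝ)/(n:ℝ) := by linarith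
    have hnum : 0 < (lam + y/Real.sqrt n) - (i:ℝ)/(n:ℝ) := by
      rw [hx]; linarith [(abs_le.1 hsabs).1]
    positivity
  obtain ⟨P, hPdef⟩ : ∃ P : ℝ, P = ∏ i ∈ Finset.range dd,
      ((lam + y/Real.sqrt n) - (i:ℝ)/(n:ℝ))/(1 - (i:ℝ)/(n:ℝ)) := ⟨_, rfl⟩
  obtain ⟨S, hSdef⟩ : ∃ S : ℝ, S = ∑ j ∈ Finset.range dd,
      ((lam + y/Real.sqrt n) - (j:ℝ)/(n:ℝ))⁻¹ := ⟨_, rfl⟩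
  have hPpos : 0 < P := hPdef ▸ Finset.prod_pos hfpos
  -- rewrite betaDeriv as P * S
  have hbd : betaDeriv n dd (lam + y/Real.sqrt n) = P * S := by
    rw [betaDeriv, if_pos hcond, hSdef, Finset.mul_sum]
    refine Finset.sum_congr rfl fun j hj => ?_
    obtain ⟨hj0, hj1⟩ := hiN j hj
    have hden : 0 < 1 - (j:ℝ)/(n:ℝ) := by linarith
    have hnum : 0 < (lam + y/Real.sqrt n) - (j:ℝ)/(n:ℝ) := by
      rw [hx]; linarith [(abs_le.1 hsabs).1]
    rw [hPdef, ← Finset.prod_erase_mul _ _ hj]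
    have key : (((lam + y/Real.sqrt n) - (j:ℝ)/(n:ℝ))/(1 - (j:ℝ)/(n:ℝ))) *
        ((lam + y/Real.sqrt n) - (j:ℝ)/(n:ℝ))⁻¹ = (1 - (j:ℝ)/(n:ℝ))⁻¹ := by
      rw [div_eq_mul_inv, mul_comm ((lam + y/Real.sqrt n) - (j:ℝ)/(n:ℝ)),
        mul_assoc, mul_inv_cancel₀ hnum.ne', mul_one]
    rw [mul_assoc, key, mul_comm]
  -- bounds on S
  have hlwrpos : 0 < 1 - (dd:ℝ)/(n:ℝ) - sm := by linarith
  have hSle : S ≤ (1+ε₀) * (dd:ℝ) := by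
    have h1 : S ≤ ∑ _j ∈ Finset.range dd, (1 - (dd:ℝ)/(n:ℝ) - sm)⁻¹ := by
      rw [hSdef]
      refine Finset.sum_le_sum fun j hj => ?_
      obtain ⟨hj0, hj1⟩ := hiN j hj
      have hb : 1 - (dd:ℝ)/(n:ℝ) - sm ≤ (lam + y/Real.sqrt n) - (j:ℝ)/(n:ℝ) := by
        rw [hx]; linarith
      exact inv_anti₀ hlwrpos hb
    rw [Finset.sum_const, Finset.card_range, nsmul_eq_mul] at h1
    have h2 : (1 - (dd:ℝ)/(n:ℝ) - sm)⁻¹ ≤ 1 + ε₀ := by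
      have h9 : 1 ≤ (1+ε₀)*(1 - (dd:ℝ)/(n:ℝ) - sm) := by nlinarith
      rw [← one_div, div_le_iff₀ hlwrpos]; linarith
    calc S ≤ (dd:ℝ) * (1 - (dd:ℝ)/(n:ℝ) - sm)⁻¹ := h1
      _ ≤ (dd:ℝ) * (1 + ε₀) := by
          exact mul_le_mul_of_nonneg_left h2 hDpos.le
      _ = (1+ε₀) * (dd:ℝ) := by ring
  have hSge : (1-ε₀) * (dd:ℝ) ≤ S := by
    have h1 : ∑ _j ∈ Finset.range dd, (1 + sm)⁻¹ ≤ S := by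
      rw [hSdef]
      refine Finset.sum_le_sum fun j hj => ?_
      obtain ⟨hj0, hj1⟩ := hiN j hj
      have hnum : 0 < (lam + y/Real.sqrt n) - (j:ℝ)/(n:ℝ) := by
        rw [hx]; linarith [(abs_le.1 hsabs).1]
      have hb : (lam + y/Real.sqrt n) - (j:ℝ)/(n:ℝ) ≤ 1 + sm := by
        rw [hx]; linarith
      exact inv_anti₀ hnum hb
    rw [Finset.sum_const, Finset.card_range, nsmul_eq_mul] at h1
    have h2 : 1 - ε₀ ≤ (1 + sm)⁻¹ := by
      have h9 : (1-ε₀)*(1+sm) ≤ 1 := by nlinarith [mul_nonneg hε₀.le hsm0]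
      rw [← one_div, le_div_iff₀ (by linarith : (0:ℝ) < 1 + sm)]; linarith
    calc (1-ε₀) * (dd:ℝ) ≤ (1+sm)⁻¹ * (dd:ℝ) := by
          exact mul_le_mul_of_nonneg_right h2 hDpos.le
      _ = (dd:ℝ) * (1+sm)⁻¹ := by ring
      _ ≤ S := h1
  -- log bounds for the product
  have hlogb : ∀ i ∈ Finset.range dd,
      |Real.log (((lam + y/Real.sqrt n) - (i:ℝ)/(n:ℝ))/(1 - (i:ℝ)/(n:ℝ))) - s|
        ≤ 8*sm^2 + 2*sm*((dd:ℝ)/(n:ℝ)) := by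
    intro i hi
    obtain ⟨hi0, hi1⟩ := hiN i hi
    have hden : (7:ℝ)/8 ≤ 1 - (i:ℝ)/(n:ℝ) := by linarith
    have hdenpos : 0 < 1 - (i:ℝ)/(n:ℝ) := by linarith
    obtain ⟨t, htdef⟩ : ∃ t : ℝ, t = s / (1 - (i:ℝ)/(n:ℝ)) := ⟨_, rfl⟩
    have hfi : ((lam + y/Real.sqrt n) - (i:ℝ)/(n:ℝ))/(1 - (i:ℝ)/(n:ℝ)) = 1 + t := by
      have hsplit : lam + y/Real.sqrt n - (i:ℝ)/(n:ℝ) = (1 - (i:ℝ)/(n:ℝ)) + s := by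
        rw [hx]; ring
      rw [hsplit, htdef, add_div, div_self hdenpos.ne']
    have hta : |t| ≤ 2*sm := by
      rw [htdef, abs_div, abs_of_pos hdenpos]
      have h5 : |s|/(1 - (i:ℝ)/(n:ℝ)) ≤ sm/(7/8) :=
        div_le_div₀ hsm0 hsbound (by norm_num) hden
      have h6 : sm/(7/8) = (8/7)*sm := by ring
      linarith
    have ht2 : |Real.log (1+t) - t| ≤ 2*t^2 := log_approx (by linarith)
    have ht3 : 2*t^2 ≤ 8*sm^2 := by
      have h5 := mul_self_le_mul_self (abs_nonneg t) hta
      rw [abs_mul_abs_self] at h5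
      calc 2*t^2 = 2*(t*t) := by ring
        _ ≤ 2*((2*sm)*(2*sm)) := by linarith
        _ = 8*sm^2 := by ring
    have ht4 : |t - s| ≤ 2*sm*((dd:ℝ)/(n:ℝ)) := by
      have he : t - s = s * ((i:ℝ)/(n:ℝ)) / (1 - (i:ℝ)/(n:ℝ)) := by
        rw [eq_div_iff hdenpos.ne', htdef, sub_mul, div_mul_cancel₀ _ hdenpos.ne']
        ring
      rw [he, abs_div, abs_mul, abs_of_pos hdenpos, abs_of_nonneg hi0]
      have h5 : |s| * ((i:ℝ)/(n:ℝ)) ≤ sm * ((dd:ℝ)/(n:ℝ)) :=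
        mul_le_mul hsbound hi1 hi0 hsm0
      have h6 : |s| * ((i:ℝ)/(n:ℝ)) / (1 - (i:ℝ)/(n:ℝ)) ≤ (sm * ((dd:ℝ)/(n:ℝ)))/(7/8) :=
        div_le_div₀ (by positivity) h5 (by norm_num) hden
      have h7 : (sm * ((dd:ℝ)/(n:ℝ)))/(7/8) = (8/7)*(sm*((dd:ℝ)/(n:ℝ))) := by ring
      have h8 : 0 ≤ sm*((dd:ℝ)/(n:ℝ)) := mul_nonneg hsm0 hDN0
      calc |s| * ((i:ℝ)/(n:ℝ)) / (1 - (i:ℝ)/(n:ℝ)) ≤ (sm * ((dd:ℝ)/(n:ℝ)))/(7/8) := h6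
        _ = (8/7)*(sm*((dd:ℝ)/(n:ℝ))) := h7
        _ ≤ 2*(sm*((dd:ℝ)/(n:ℝ))) := by linarith
        _ = 2*sm*((dd:ℝ)/(n:ℝ)) := by ring
    calc |Real.log (((lam + y/Real.sqrt n) - (i:ℝ)/(n:ℝ))/(1 - (i:ℝ)/(n:ℝ))) - s|
        = |(Real.log (1+t) - t) + (t - s)| := by rw [hfi]; ring_nf
      _ ≤ |Real.log (1+t) - t| + |t - s| := abs_add_le _ _
      _ ≤ 8*sm^2 + 2*sm*((dd:ℝ)/(n:ℝ)) := by linarith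
  -- sum of logs
  have hPeq : P = Real.exp (∑ i ∈ Finset.range dd,
      Real.log (((lam + y/Real.sqrt n) - (i:ℝ)/(n:ℝ))/(1 - (i:ℝ)/(n:ℝ)))) := by
    rw [hPdef, Real.exp_sum]
    exact Finset.prod_congr rfl fun i hi => (Real.exp_log (hfpos i hi)).symm
  have hsumb : |(∑ i ∈ Finset.range dd,
      Real.log (((lam + y/Real.sqrt n) - (i:ℝ)/(n:ℝ))/(1 - (i:ℝ)/(n:ℝ)))) - (dd:ℝ)*s|
      ≤ 8*(dd:ℝ)*sm^2 + 2*sm*(dd:ℝ)^2/(n:ℝ) := by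
    have hsum0 : (∑ i ∈ Finset.range dd,
        Real.log (((lam + y/Real.sqrt n) - (i:ℝ)/(n:ℝ))/(1 - (i:ℝ)/(n:ℝ)))) - (dd:ℝ)*s
        = ∑ i ∈ Finset.range dd,
          (Real.log (((lam + y/Real.sqrt n) - (i:ℝ)/(n:ℝ))/(1 - (i:ℝ)/(n:ℝ))) - s) := by
      rw [Finset.sum_sub_distrib, Finset.sum_const, Finset.card_range, nsmul_eq_mul]
    rw [hsum0]
    calc |∑ i ∈ Finset.range dd,
          (Real.log (((lam + y/Real.sqrt n) - (i:ℝ)/(n:ℝ))/(1 - (i:ℝ)/(n:ℝ))) - s)|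
        ≤ ∑ i ∈ Finset.range dd,
          |Real.log (((lam + y/Real.sqrt n) - (i:ℝ)/(n:ℝ))/(1 - (i:ℝ)/(n:ℝ))) - s| :=
          Finset.abs_sum_le_sum_abs _ _
      _ ≤ ∑ _i ∈ Finset.range dd, (8*sm^2 + 2*sm*((dd:ℝ)/(n:ℝ))) := Finset.sum_le_sum hlogb
      _ = (dd:ℝ) * (8*sm^2 + 2*sm*((dd:ℝ)/(n:ℝ))) := by
          rw [Finset.sum_const, Finset.card_range, nsmul_eq_mul]
      _ = 8*(dd:ℝ)*sm^2 + 2*sm*(dd:ℝ)^2/(n:ℝ) := by ring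
  -- exp of D*s
  have hDs : (dd:ℝ)*s = -Real.log dd + (dd:ℝ)/Real.sqrt n*(y-α) := by
    rw [hs]
    field_simp
  obtain ⟨E, hEdef⟩ : ∃ E : ℝ, E = Real.exp ((dd:ℝ)/Real.sqrt n*(y-α)) := ⟨_, rfl⟩
  have hEpos : 0 < E := hEdef ▸ Real.exp_pos _
  have hexpDs : Real.exp ((dd:ℝ)*s) = E / dd := by
    rw [hDs, Real.exp_add, Real.exp_neg, Real.exp_log hDpos, hEdef]
    ring
  obtain ⟨η, hηdef⟩ : ∃ η : ℝ, η = 8*(dd:ℝ)*sm^2 + 2*sm*(dd:ℝ)^2/(n:ℝ) := ⟨_, rfl⟩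
  have hη0 : 0 ≤ η := by
    rw [hηdef]; positivity
  have hηε : η ≤ ε₀ := hηdef ▸ hH
  have hηe : Real.exp η ≤ 1 + ε₀ := hηdef ▸ hHe
  rw [← hηdef] at hsumb
  have hPle : P ≤ (E/dd) * (1+ε₀) := by
    rw [hPeq]
    calc Real.exp (∑ i ∈ Finset.range dd,
          Real.log (((lam + y/Real.sqrt n) - (i:ℝ)/(n:ℝ))/(1 - (i:ℝ)/(n:ℝ))))
        ≤ Real.exp ((dd:ℝ)*s + η) := Real.exp_le_exp.2 (by linarith [(abs_le.1 hsumb).2])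
      _ = (E/dd) * Real.exp η := by rw [Real.exp_add, hexpDs]
      _ ≤ (E/dd)*(1+ε₀) := mul_le_mul_of_nonneg_left hηe (div_nonneg hEpos.le hDpos.le)
  have hPge : (E/dd)*(1-ε₀) ≤ P := by
    rw [hPeq]
    calc (E/dd)*(1-ε₀) ≤ (E/dd)*Real.exp (-η) := by
          refine mul_le_mul_of_nonneg_left ?_ (div_nonneg hEpos.le hDpos.le)
          have h5 := Real.add_one_le_exp (-η)
          linarith
      _ = Real.exp ((dd:ℝ)*s - η) := by rw [sub_eq_add_neg, Real.exp_add, hexpDs]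
      _ ≤ Real.exp (∑ i ∈ Finset.range dd,
          Real.log (((lam + y/Real.sqrt n) - (i:ℝ)/(n:ℝ))/(1 - (i:ℝ)/(n:ℝ)))) :=
          Real.exp_le_exp.2 (by linarith [(abs_le.1 hsumb).1])
  -- bounds on lam
  have hlamb : |lam - 1| ≤ sm := by
    rw [hlamdef, hsmdef]
    have h5 : |α| / Real.sqrt n ≤ (L + |α|)/Real.sqrt n := by
      gcongr
      linarith
    calc |1 - (Real.log dd/dd + α/Real.sqrt n) - 1|
        = |Real.log dd/dd + α/Real.sqrt n| := by rw [← abs_neg]; congr 1; ring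
      _ ≤ |Real.log dd/dd| + |α/Real.sqrt n| := abs_add_le _ _
      _ ≤ Real.log dd/dd + (L+|α|)/Real.sqrt n := by
          rw [abs_of_nonneg (by positivity), abs_div, abs_of_pos hrnpos]
          linarith
  have hlamge : 1 - ε₀ ≤ lam := by linarith [(abs_le.1 hlamb).1]
  have hlamle : lam ≤ 1 + ε₀ := by linarith [(abs_le.1 hlamb).2]
  have hlam0 : 0 ≤ lam := by linarith
  -- final combination
  refine ⟨hcond, ?_, ?_⟩
  · rw [hbd]
    have h1 : ((E/dd)*(1-ε₀)) * ((1-ε₀)*(dd:ℝ)) ≤ P * S :=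
      mul_le_mul hPge hSge (mul_nonneg (by linarith) hDpos.le) hPpos.le
    have h2 : ((E/dd)*(1-ε₀)) * ((1-ε₀)*(dd:ℝ)) = (1-ε₀)^2 * E := by
      field_simp
    rw [h2] at h1
    have h3 : (1-ε₀)*((1-ε₀)^2*E) ≤ lam * (P*S) :=
      mul_le_mul hlamge h1 (mul_nonneg (sq_nonneg _) hEpos.le) hlam0
    have h4 := mul_le_mul_of_nonneg_left h3
      (show (0:ℝ) ≤ (dd:ℝ)/Real.sqrt n by positivity)
    calc (1-ε₀)^3 * ((dd:ℝ)/Real.sqrt n * Real.exp ((dd:ℝ)/Real.sqrt n * (y - α)))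
        = (dd:ℝ)/Real.sqrt n * ((1-ε₀)*((1-ε₀)^2*E)) := by rw [hEdef]; ring
      _ ≤ (dd:ℝ)/Real.sqrt n * (lam*(P*S)) := h4
      _ = lam * ((dd:ℝ)/Real.sqrt n) * (P*S) := by ring
  · rw [hbd]
    have hSpos : 0 < S := lt_of_lt_of_le (mul_pos (by linarith) hDpos) hSge
    have h1 : P * S ≤ ((E/dd)*(1+ε₀)) * ((1+ε₀)*(dd:ℝ)) :=
      mul_le_mul hPle hSle hSpos.le (mul_nonneg (div_nonneg hEpos.le hDpos.le) (by linarith))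
    have h2 : ((E/dd)*(1+ε₀)) * ((1+ε₀)*(dd:ℝ)) = (1+ε₀)^2 * E := by
      field_simp
    rw [h2] at h1
    have h3 : lam * (P*S) ≤ (1+ε₀)*((1+ε₀)^2*E) :=
      mul_le_mul hlamle h1 (mul_nonneg hPpos.le hSpos.le) (by linarith)
    have h4 := mul_le_mul_of_nonneg_left h3
      (show (0:ℝ) ≤ (dd:ℝ)/Real.sqrt n by positivity)
    calc lam * ((dd:ℝ)/Real.sqrt n) * (P*S)
        = (dd:ℝ)/Real.sqrt n * (lam*(P*S)) := by ring
      _ ≤ (dd:ℝ)/Real.sqrt n * ((1+ε₀)*((1+ε₀)^2*E)) := h4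
      _ = (1+ε₀)^3 * ((dd:ℝ)/Real.sqrt n * Real.exp ((dd:ℝ)/Real.sqrt n * (y - α))) := by
          rw [hEdef]; ring


set_option maxHeartbeats 4000000 in
/-- Lemma 6.9: with `λ_n = 1 − (log d_n/d_n + α_n/√n)`, `d_n → ∞`,
`d_n/n^{2/3} → 0` and `d_n α_n²/n → 0`, for every `L > 0`,
`sup_{0<|z|≤L} | (e^{(d_n/√n)(z−α_n)} − e^{−(d_n/√n)α_n}) / (t_{n,1}(z) d_n/√n) − 1 | → 0`,
where `t_{n,1}(z) = λ_n ∫_{[0,z]} β'_n(λ_n + y/√n) dy`. -/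
theorem stmt13 (d : ℕ → ℕ) (hd : ∀ n : ℕ, 1 ≤ n → 1 ≤ d n ∧ d n ≤ n)
    (hdtop : Tendsto d atTop atTop)
    (hdn : Tendsto (fun n => (d n : ℝ) / (n : ℝ) ^ ((2 : ℝ) / 3)) atTop (𝓝 0))
    (a : ℕ → ℝ)
    (ha : Tendsto (fun n => (d n : ℝ) * (a n) ^ 2 / (n : ℝ)) atTop (𝓝 0))
    (lam : ℕ → ℝ)
    (hlam : ∀ n, lam n = 1 - (Real.log (d n) / (d n : ℝ) + a n / Real.sqrt (n : ℝ)))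
    (L : ℝ) (hL : 0 < L) :
    ∀ δ > 0, ∀ᶠ n in atTop, ∀ z : ℝ, 0 < |z| → |z| ≤ L →
      |(Real.exp ((d n : ℝ) / Real.sqrt (n : ℝ) * (z - a n)) -
          Real.exp (-((d n : ℝ) / Real.sqrt (n : ℝ)) * a n)) /
        ((lam n * ∫ y in (0 : ℝ)..z,
            betaDeriv n (d n) (lam n + y / Real.sqrt (n : ℝ))) *
          ((d n : ℝ) / Real.sqrt (n : ℝ))) - 1| < δ := by
  intro δ hδ
  have TD : Tendsto (fun n => (d n : ℝ)) atTop atTop :=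
    tendsto_natCast_atTop_atTop.comp hdtop
  have TN : Tendsto (fun n : ℕ => (n:ℝ)) atTop atTop := tendsto_natCast_atTop_atTop
  have Trn : Tendsto (fun n : ℕ => Real.sqrt (n:ℝ)) atTop atTop := by
    have h1 : Tendsto (fun x : ℝ => x ^ (1/2 : ℝ)) atTop atTop :=
      tendsto_rpow_atTop (by norm_num)
    exact (h1.comp TN).congr fun n => (Real.sqrt_eq_rpow _).symm
  have TlogD : Tendsto (fun n => Real.log (d n) / (d n : ℝ)) atTop (𝓝 0) := by
    have h1 := Real.tendsto_pow_log_div_mul_add_atTop 1 0 1 one_ne_zero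
    simp only [pow_one, one_mul, add_zero] at h1
    exact h1.comp TD
  have Tlog2 : Tendsto (fun n => (Real.log (d n))^2 / (d n : ℝ)) atTop (𝓝 0) := by
    have h1 := Real.tendsto_pow_log_div_mul_add_atTop 1 0 2 one_ne_zero
    simp only [one_mul, add_zero] at h1
    exact h1.comp TD
  have TDN : Tendsto (fun n => (d n : ℝ)/(n:ℝ)) atTop (𝓝 0) := by
    refine squeeze_zero' (Eventually.of_forall fun n => by positivity) ?_ hdn
    filter_upwards [eventually_ge_atTop 1] with n hn
    have hN1 : (1:ℝ) ≤ (n:ℝ) := by exact_mod_cast hn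
    have h1 : (n:ℝ) ^ ((2:ℝ)/3) ≤ (n:ℝ) := by
      calc (n:ℝ)^((2:ℝ)/3) ≤ (n:ℝ)^(1:ℝ) :=
            Real.rpow_le_rpow_of_exponent_le hN1 (by norm_num)
        _ = (n:ℝ) := Real.rpow_one _
    have h2 : 0 < (n:ℝ)^((2:ℝ)/3) := Real.rpow_pos_of_pos (by linarith) _
    exact div_le_div_of_nonneg_left (by positivity) h2 h1
  have Tu : Tendsto (fun n => (d n:ℝ)^3/(n:ℝ)^2) atTop (𝓝 0) := by
    have h1 : Tendsto (fun n => ((d n:ℝ)/(n:ℝ)^((2:ℝ)/3))^3) atTop (𝓝 0) := by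
      have h2 := hdn.pow 3
      simpa using h2
    refine (h1.congr' ?_ : _)
    filter_upwards [eventually_ge_atTop 1] with n hn
    have hN0 : (0:ℝ) ≤ (n:ℝ) := by positivity
    have hrw : ((n:ℝ)^((2:ℝ)/3))^(3:ℕ) = (n:ℝ)^(2:ℕ) := by
      rw [← Real.rpow_natCast ((n:ℝ)^((2:ℝ)/3)) 3, ← Real.rpow_mul hN0,
        ← Real.rpow_natCast (n:ℝ) 2]
      norm_num
    rw [div_pow, hrw]
  have Tsqn : Tendsto (fun n => Real.sqrt ((d n:ℝ)*(a n)^2/(n:ℝ))) atTop (𝓝 0) := by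
    have := ha.sqrt
    simpa using this
  have Tarn : Tendsto (fun n => |a n| / Real.sqrt (n:ℝ)) atTop (𝓝 0) := by
    refine squeeze_zero' (Eventually.of_forall fun n => by positivity) ?_ Tsqn
    filter_upwards [eventually_ge_atTop 1] with n hn
    have hN1 : (1:ℝ) ≤ (n:ℝ) := by exact_mod_cast hn
    have hD1 : (1:ℝ) ≤ (d n : ℝ) := by exact_mod_cast (hd n hn).1
    have h1 : |a n| / Real.sqrt (n:ℝ) = Real.sqrt ((a n)^2/(n:ℝ)) := by
      rw [Real.sqrt_div (sq_nonneg _), Real.sqrt_sq_eq_abs]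
    rw [h1]
    apply Real.sqrt_le_sqrt
    have h2 : (a n)^2 ≤ (d n:ℝ)*(a n)^2 := by nlinarith [sq_nonneg (a n)]
    gcongr
  have TLrn : Tendsto (fun n : ℕ => L / Real.sqrt (n:ℝ)) atTop (𝓝 0) :=
    tendsto_const_nhds.div_atTop Trn
  have Tsm : Tendsto
      (fun n => Real.log (d n)/(d n:ℝ) + (L + |a n|)/Real.sqrt (n:ℝ)) atTop (𝓝 0) := by
    have h2 : Tendsto (fun n => (L + |a n|)/Real.sqrt (n:ℝ)) atTop (𝓝 0) := by
      have h3 := TLrn.add Tarn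
      simp only [add_zero] at h3
      exact h3.congr fun n => (add_div _ _ _).symm
    have h4 := TlogD.add h2
    simpa using h4
  have TDlogN : Tendsto (fun n => (d n:ℝ)*Real.log (d n)/(n:ℝ)) atTop (𝓝 0) := by
    have hbnd : Tendsto (fun n => 2*Real.sqrt ((d n:ℝ)^3/(n:ℝ)^2)) atTop (𝓝 0) := by
      have := (Tu.sqrt).const_mul 2
      simpa using this
    refine squeeze_zero' ?_ ?_ hbnd
    · filter_upwards [eventually_ge_atTop 1] with n hn
      have hD1 : (1:ℝ) ≤ (d n : ℝ) := by exact_mod_cast (hd n hn).1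
      have hlog0 : 0 ≤ Real.log (d n) := Real.log_nonneg hD1
      positivity
    · filter_upwards [eventually_ge_atTop 1] with n hn
      have hN1 : (1:ℝ) ≤ (n:ℝ) := by exact_mod_cast hn
      have hD1 : (1:ℝ) ≤ (d n : ℝ) := by exact_mod_cast (hd n hn).1
      have hD0 : (0:ℝ) ≤ (d n : ℝ) := by linarith
      have hlog2 : Real.log (d n) ≤ 2*Real.sqrt (d n) := by
        have h3 : Real.log (Real.sqrt (d n)) ≤ Real.sqrt (d n) - 1 :=
          Real.log_le_sub_one_of_pos (Real.sqrt_pos.2 (by linarith))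
        rw [Real.log_sqrt hD0] at h3
        linarith [Real.sqrt_nonneg (d n : ℝ)]
      have heq : Real.sqrt ((d n:ℝ)^3/(n:ℝ)^2) = (d n:ℝ)*Real.sqrt (d n)/(n:ℝ) := by
        rw [Real.sqrt_div (by positivity) ((n:ℝ)^2),
          show ((d n:ℝ)^3) = ((d n:ℝ)^2)*(d n:ℝ) from by ring,
          Real.sqrt_mul (by positivity), Real.sqrt_sq hD0,
          Real.sqrt_sq (by linarith : (0:ℝ) ≤ (n:ℝ))]
      rw [heq]
      calc (d n:ℝ)*Real.log (d n)/(n:ℝ) ≤ (2*((d n:ℝ)*Real.sqrt (d n)))/(n:ℝ) :=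
            (div_le_div_iff_of_pos_right (show (0:ℝ) < (n:ℝ) by linarith)).2
              (by nlinarith [mul_le_mul_of_nonneg_left hlog2 hD0])
        _ = 2*((d n:ℝ)*Real.sqrt (d n)/(n:ℝ)) := by ring
  have TD2Nrn : Tendsto (fun n => (d n:ℝ)^2/((n:ℝ)*Real.sqrt (n:ℝ))) atTop (𝓝 0) := by
    have hprod : Tendsto (fun n => Real.sqrt (((d n:ℝ)^3/(n:ℝ)^2) * ((d n:ℝ)/(n:ℝ))))
        atTop (𝓝 0) := by
      have := (Tu.mul TDN).sqrt
      simpa using this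
    refine hprod.congr' ?_
    filter_upwards [eventually_ge_atTop 1] with n hn
    have hN1 : (1:ℝ) ≤ (n:ℝ) := by exact_mod_cast hn
    have hN0 : (0:ℝ) ≤ (n:ℝ) := by linarith
    have hrn2 : Real.sqrt (n:ℝ)^2 = (n:ℝ) := Real.sq_sqrt hN0
    have h1 : 0 ≤ (d n:ℝ)^2/((n:ℝ)*Real.sqrt (n:ℝ)) := by positivity
    have h2 : ((d n:ℝ)^3/(n:ℝ)^2) * ((d n:ℝ)/(n:ℝ))
        = ((d n:ℝ)^2/((n:ℝ)*Real.sqrt (n:ℝ)))^2 := by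
      rw [div_pow, mul_pow, hrn2]; ring
    rw [h2, Real.sqrt_sq h1]
  have TaD2 : Tendsto (fun n => |a n| *(d n:ℝ)^2/((n:ℝ)*Real.sqrt (n:ℝ))) atTop (𝓝 0) := by
    have hprod : Tendsto
        (fun n => Real.sqrt (((d n:ℝ)*(a n)^2/(n:ℝ)) * ((d n:ℝ)^3/(n:ℝ)^2)))
        atTop (𝓝 0) := by
      have := (ha.mul Tu).sqrt
      simpa using this
    refine hprod.congr' ?_
    filter_upwards [eventually_ge_atTop 1] with n hn
    have hN1 : (1:ℝ) ≤ (n:ℝ) := by exact_mod_cast hn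
    have hN0 : (0:ℝ) ≤ (n:ℝ) := by linarith
    have hrn2 : Real.sqrt (n:ℝ)^2 = (n:ℝ) := Real.sq_sqrt hN0
    have h1 : 0 ≤ |a n| *(d n:ℝ)^2/((n:ℝ)*Real.sqrt (n:ℝ)) := by positivity
    have h2 : ((d n:ℝ)*(a n)^2/(n:ℝ)) * ((d n:ℝ)^3/(n:ℝ)^2)
        = (|a n| *(d n:ℝ)^2/((n:ℝ)*Real.sqrt (n:ℝ)))^2 := by
      rw [div_pow, mul_pow, mul_pow, hrn2, sq_abs]; ring
    rw [h2, Real.sqrt_sq h1]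
  have TB : Tendsto (fun n => 16*((Real.log (d n))^2/(d n:ℝ)) + 32*L^2*((d n:ℝ)/(n:ℝ))
      + 32*((d n:ℝ)*(a n)^2/(n:ℝ)) + 2*((d n:ℝ)*Real.log (d n)/(n:ℝ))
      + 2*L*((d n:ℝ)^2/((n:ℝ)*Real.sqrt (n:ℝ)))
      + 2*(|a n| *(d n:ℝ)^2/((n:ℝ)*Real.sqrt (n:ℝ)))) atTop (𝓝 0) := by
    have h := ((Tlog2.const_mul 16).add ((TDN.const_mul (32*L^2)).add
      ((ha.const_mul 32).add ((TDlogN.const_mul 2).add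
      ((TD2Nrn.const_mul (2*L)).add (TaD2.const_mul 2))))))
    have h2 : Tendsto (fun n => 16*((Real.log (d n))^2/(d n:ℝ))
        + (32*L^2*((d n:ℝ)/(n:ℝ)) + (32*((d n:ℝ)*(a n)^2/(n:ℝ))
        + (2*((d n:ℝ)*Real.log (d n)/(n:ℝ)) + (2*L*((d n:ℝ)^2/((n:ℝ)*Real.sqrt (n:ℝ)))
        + 2*(|a n| *(d n:ℝ)^2/((n:ℝ)*Real.sqrt (n:ℝ)))))))) atTop (𝓝 0) := by
      simpa using h
    exact h2.congr fun n => by ring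
  have Teta : Tendsto (fun n => 8*(d n:ℝ)*(Real.log (d n)/(d n:ℝ)
      + (L+|a n|)/Real.sqrt (n:ℝ))^2
      + 2*(Real.log (d n)/(d n:ℝ) + (L+|a n|)/Real.sqrt (n:ℝ))*(d n:ℝ)^2/(n:ℝ))
      atTop (𝓝 0) := by
    refine squeeze_zero' ?_ ?_ TB
    · filter_upwards [eventually_ge_atTop 1] with n hn
      have hD1 : (1:ℝ) ≤ (d n : ℝ) := by exact_mod_cast (hd n hn).1
      have hlog0 : 0 ≤ Real.log (d n) := Real.log_nonneg hD1
      positivity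
    · filter_upwards [eventually_ge_atTop 1] with n hn
      have hN1 : (1:ℝ) ≤ (n:ℝ) := by exact_mod_cast hn
      have hN0 : (0:ℝ) ≤ (n:ℝ) := by linarith
      have hNne : (n:ℝ) ≠ 0 := by linarith
      have hD1 : (1:ℝ) ≤ (d n : ℝ) := by exact_mod_cast (hd n hn).1
      have hD0 : (0:ℝ) ≤ (d n : ℝ) := by linarith
      have hDne : (d n:ℝ) ≠ 0 := by linarith
      have hrnpos : 0 < Real.sqrt (n:ℝ) := Real.sqrt_pos.2 (by linarith)
      have hrnne : Real.sqrt (n:ℝ) ≠ 0 := hrnpos.ne'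
      obtain ⟨p, hp⟩ : ∃ p : ℝ, p = Real.log (d n)/(d n:ℝ) := ⟨_, rfl⟩
      obtain ⟨q, hq⟩ : ∃ q : ℝ, q = (L+|a n|)/Real.sqrt (n:ℝ) := ⟨_, rfl⟩
      rw [← hp, ← hq]
      have e1 : (d n:ℝ)*p^2 = (Real.log (d n))^2/(d n:ℝ) := by
        rw [hp]; field_simp
      have e2 : p*(d n:ℝ)^2/(n:ℝ) = (d n:ℝ)*Real.log (d n)/(n:ℝ) := by
        rw [hp]; field_simp
      have e3 : (d n:ℝ)*q^2 = (d n:ℝ)*(L+|a n|)^2/(n:ℝ) := by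
        rw [hq, div_pow, Real.sq_sqrt hN0]; ring
      have e4 : q*(d n:ℝ)^2/(n:ℝ) = L*((d n:ℝ)^2/((n:ℝ)*Real.sqrt (n:ℝ)))
          + |a n| *((d n:ℝ)^2/((n:ℝ)*Real.sqrt (n:ℝ))) := by
        rw [hq]; field_simp
      have e6 : (d n:ℝ)*(p+q)^2 ≤ 2*((d n:ℝ)*p^2) + 2*((d n:ℝ)*q^2) := by
        have e5 : (p+q)^2 ≤ 2*p^2+2*q^2 := by nlinarith [sq_nonneg (p-q)]
        calc (d n:ℝ)*(p+q)^2 ≤ (d n:ℝ)*(2*p^2+2*q^2) := mul_le_mul_of_nonneg_left e5 hD0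
          _ = 2*((d n:ℝ)*p^2) + 2*((d n:ℝ)*q^2) := by ring
      have e8 : (d n:ℝ)*(L+|a n|)^2/(n:ℝ)
          ≤ 2*L^2*((d n:ℝ)/(n:ℝ)) + 2*((d n:ℝ)*(a n)^2/(n:ℝ)) := by
        have e7 : (L+|a n|)^2 ≤ 2*L^2 + 2*(a n)^2 := by
          nlinarith [sq_nonneg (L-|a n|), sq_abs (a n)]
        calc (d n:ℝ)*(L+|a n|)^2/(n:ℝ) ≤ (d n:ℝ)*(2*L^2+2*(a n)^2)/(n:ℝ) :=
              (div_le_div_iff_of_pos_right (show (0:ℝ) < (n:ℝ) by linarith)).2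
                (mul_le_mul_of_nonneg_left e7 hD0)
          _ = 2*L^2*((d n:ℝ)/(n:ℝ)) + 2*((d n:ℝ)*(a n)^2/(n:ℝ)) := by ring
      have e9 : 2*(p+q)*(d n:ℝ)^2/(n:ℝ)
          = 2*(p*(d n:ℝ)^2/(n:ℝ)) + 2*(q*(d n:ℝ)^2/(n:ℝ)) := by ring
      have key1 : 8*(d n:ℝ)*(p+q)^2 ≤ 16*((Real.log (d n))^2/(d n:ℝ))
          + 16*((d n:ℝ)*(L+|a n|)^2/(n:ℝ)) := by
        rw [← e1, ← e3]; linarith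
      have key3 : 2*(p+q)*(d n:ℝ)^2/(n:ℝ) = 2*((d n:ℝ)*Real.log (d n)/(n:ℝ))
          + 2*L*((d n:ℝ)^2/((n:ℝ)*Real.sqrt (n:ℝ)))
          + 2*(|a n| * (d n:ℝ)^2/((n:ℝ)*Real.sqrt (n:ℝ))) := by
        rw [e9, e2, e4]; ring
      linarith [key1, key3, e8]
  obtain ⟨ε₀, hε₀def⟩ : ∃ e : ℝ, e = min (δ/15) (1/6) := ⟨_, rfl⟩
  have hε₀pos : 0 < ε₀ := by rw [hε₀def]; exact lt_min (by linarith) (by norm_num)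
  have hε₀6 : ε₀ ≤ 1/6 := by rw [hε₀def]; exact min_le_right _ _
  have hε₀δ : 15*ε₀ ≤ δ := by
    have h1 : ε₀ ≤ δ/15 := by rw [hε₀def]; exact min_le_left _ _
    linarith
  have EVDN : ∀ᶠ n in atTop, (d n:ℝ)/(n:ℝ) ≤ 1/8 :=
    TDN.eventually (eventually_le_nhds (by norm_num))
  have EVC : ∀ᶠ n in atTop, 2*((d n:ℝ)/(n:ℝ) + (Real.log (d n)/(d n:ℝ)
      + (L+|a n|)/Real.sqrt (n:ℝ))) ≤ ε₀ := by
    have h : Tendsto (fun n => 2*((d n:ℝ)/(n:ℝ) + (Real.log (d n)/(d n:ℝ)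
        + (L+|a n|)/Real.sqrt (n:ℝ)))) atTop (𝓝 0) := by
      have := (TDN.add Tsm).const_mul 2
      simpa using this
    exact h.eventually (eventually_le_nhds hε₀pos)
  have EVH : ∀ᶠ n in atTop, 8*(d n:ℝ)*(Real.log (d n)/(d n:ℝ)
      + (L+|a n|)/Real.sqrt (n:ℝ))^2 + 2*(Real.log (d n)/(d n:ℝ)
      + (L+|a n|)/Real.sqrt (n:ℝ))*(d n:ℝ)^2/(n:ℝ) ≤ ε₀ :=
    Teta.eventually (eventually_le_nhds hε₀pos)
  have EVHe : ∀ᶠ n in atTop, Real.exp (8*(d n:ℝ)*(Real.log (d n)/(d n:ℝ)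
      + (L+|a n|)/Real.sqrt (n:ℝ))^2 + 2*(Real.log (d n)/(d n:ℝ)
      + (L+|a n|)/Real.sqrt (n:ℝ))*(d n:ℝ)^2/(n:ℝ)) ≤ 1+ε₀ := by
    have h : Tendsto (fun n => Real.exp (8*(d n:ℝ)*(Real.log (d n)/(d n:ℝ)
        + (L+|a n|)/Real.sqrt (n:ℝ))^2 + 2*(Real.log (d n)/(d n:ℝ)
        + (L+|a n|)/Real.sqrt (n:ℝ))*(d n:ℝ)^2/(n:ℝ))) atTop (𝓝 1) := by
      have h2 := Real.continuous_exp.continuousAt.tendsto.comp Teta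
      simpa [Function.comp_def] using h2
    exact h.eventually (eventually_le_nhds (by linarith))
  filter_upwards [eventually_ge_atTop 1, EVDN, EVC, EVH, EVHe] with n hn1 hDN hC hH hHe
  intro z hz0 hzL
  obtain ⟨hd1, hdle⟩ := hd n hn1
  have hN1 : (1:ℝ) ≤ (n:ℝ) := by exact_mod_cast hn1
  have hNpos : (0:ℝ) < (n:ℝ) := by linarith
  have hD1 : (1:ℝ) ≤ (d n:ℝ) := by exact_mod_cast hd1
  have hrnpos : 0 < Real.sqrt (n:ℝ) := Real.sqrt_pos.2 hNpos
  have hApos : 0 < (d n:ℝ)/Real.sqrt (n:ℝ) := by positivity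
  have key : ∀ y : ℝ, |y| ≤ L →
      ((d n:ℝ)-1)/(n:ℝ) < lam n + y/Real.sqrt (n:ℝ) ∧
      (1-ε₀)^3 * ((d n:ℝ)/Real.sqrt (n:ℝ)
          * Real.exp ((d n:ℝ)/Real.sqrt (n:ℝ) * (y - a n))) ≤
        lam n * ((d n:ℝ)/Real.sqrt (n:ℝ))
          * betaDeriv n (d n) (lam n + y/Real.sqrt (n:ℝ)) ∧
      lam n * ((d n:ℝ)/Real.sqrt (n:ℝ))
          * betaDeriv n (d n) (lam n + y/Real.sqrt (n:ℝ)) ≤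
        (1+ε₀)^3 * ((d n:ℝ)/Real.sqrt (n:ℝ)
          * Real.exp ((d n:ℝ)/Real.sqrt (n:ℝ) * (y - a n))) :=
    fun y hy => pointwise n (d n) (lam n) (a n) L ε₀ _ y hn1 hd1 hε₀pos hε₀6
      (hlam n) hy rfl hDN hC hH hHe
  have hbdcont : ContinuousOn
      (fun y => betaDeriv n (d n) (lam n + y/Real.sqrt (n:ℝ))) (Set.Icc (-L) L) := by
    have hGc : Continuous (fun y : ℝ => ∑ j ∈ Finset.range (d n), (1 - (j:ℝ)/(n:ℝ))⁻¹ *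
        ∏ i ∈ (Finset.range (d n)).erase j,
          ((lam n + y/Real.sqrt (n:ℝ)) - (i:ℝ)/(n:ℝ))/(1 - (i:ℝ)/(n:ℝ))) := by
      apply continuous_finset_sum
      intro j _
      apply Continuous.mul continuous_const
      apply continuous_finset_prod
      intro i _
      apply Continuous.div_const
      exact (continuous_const.add (continuous_id.div_const _)).sub continuous_const
    refine ContinuousOn.congr hGc.continuousOn ?_
    intro y hy
    have hy' : |y| ≤ L := abs_le.2 ⟨hy.1, hy.2⟩
    have hcond := (key y hy').1
    simp only [betaDeriv, if_pos hcond]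
  have hgcont : ContinuousOn (fun y => lam n * ((d n:ℝ)/Real.sqrt (n:ℝ))
      * betaDeriv n (d n) (lam n + y/Real.sqrt (n:ℝ))) (Set.Icc (-L) L) :=
    continuousOn_const.mul hbdcont
  have hhcont : Continuous (fun y : ℝ => (d n:ℝ)/Real.sqrt (n:ℝ)
      * Real.exp ((d n:ℝ)/Real.sqrt (n:ℝ) * (y - a n))) := by
    apply continuous_const.mul
    apply Real.continuous_exp.comp
    exact continuous_const.mul (continuous_id.sub continuous_const)
  have hFTC : ∀ u v : ℝ, (∫ y in u..v, (d n:ℝ)/Real.sqrt (n:ℝ)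
      * Real.exp ((d n:ℝ)/Real.sqrt (n:ℝ) * (y - a n)))
      = Real.exp ((d n:ℝ)/Real.sqrt (n:ℝ) * (v - a n))
        - Real.exp ((d n:ℝ)/Real.sqrt (n:ℝ) * (u - a n)) := by
    intro u v
    have hder : ∀ t ∈ Set.uIcc u v,
        HasDerivAt (fun y : ℝ => Real.exp ((d n:ℝ)/Real.sqrt (n:ℝ) * (y - a n)))
          ((d n:ℝ)/Real.sqrt (n:ℝ) * Real.exp ((d n:ℝ)/Real.sqrt (n:ℝ) * (t - a n))) t := by
      intro t _
      have h1 : HasDerivAt (fun y : ℝ => (d n:ℝ)/Real.sqrt (n:ℝ)*(y - a n))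
          ((d n:ℝ)/Real.sqrt (n:ℝ)) t := by
        simpa using ((hasDerivAt_id t).sub_const (a n)).const_mul ((d n:ℝ)/Real.sqrt (n:ℝ))
      have h2 := h1.exp
      simpa [mul_comm] using h2
    exact intervalIntegral.integral_eq_sub_of_hasDerivAt hder (hhcont.intervalIntegrable u v)
  have hcup : Continuous (fun y : ℝ => (1+ε₀)^3 * ((d n:ℝ)/Real.sqrt (n:ℝ)
      * Real.exp ((d n:ℝ)/Real.sqrt (n:ℝ) * (y - a n)))) := continuous_const.mul hhcont
  have hclo : Continuous (fun y : ℝ => (1-ε₀)^3 * ((d n:ℝ)/Real.sqrt (n:ℝ)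
      * Real.exp ((d n:ℝ)/Real.sqrt (n:ℝ) * (y - a n)))) := continuous_const.mul hhcont
  have hexp0 : Real.exp (-((d n:ℝ)/Real.sqrt (n:ℝ)) * a n)
      = Real.exp ((d n:ℝ)/Real.sqrt (n:ℝ) * (0 - a n)) := by
    congr 1
    ring
  have hzne : z ≠ 0 := by
    intro h; rw [h] at hz0; simp at hz0
  rcases lt_or_gt_of_ne hzne with hzneg | hzpos
  · -- z < 0
    have hzL' : -L ≤ z := by
      have h1 : |z| = -z := abs_of_neg hzneg
      linarith [hzL, h1 ▸ hzL]
    have hsub : Set.uIcc z (0:ℝ) ⊆ Set.Icc (-L) L := by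
      rw [Set.uIcc_of_le hzneg.le]
      exact Set.Icc_subset_Icc hzL' (by linarith)
    have hgI : IntervalIntegrable (fun y => lam n * ((d n:ℝ)/Real.sqrt (n:ℝ))
        * betaDeriv n (d n) (lam n + y/Real.sqrt (n:ℝ))) MeasureTheory.volume z 0 :=
      (hgcont.mono hsub).intervalIntegrable
    have hmem : ∀ y ∈ Set.Icc z (0:ℝ), |y| ≤ L := fun y hy =>
      abs_le.2 ⟨by linarith [hy.1], by linarith [hy.2]⟩
    have hup : (∫ y in z..(0:ℝ), lam n * ((d n:ℝ)/Real.sqrt (n:ℝ))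
        * betaDeriv n (d n) (lam n + y/Real.sqrt (n:ℝ)))
        ≤ (1+ε₀)^3 * (Real.exp ((d n:ℝ)/Real.sqrt (n:ℝ) * (0 - a n))
          - Real.exp ((d n:ℝ)/Real.sqrt (n:ℝ) * (z - a n))) := by
      have h1 := intervalIntegral.integral_mono_on hzneg.le hgI
        (hcup.intervalIntegrable z 0)
        (fun y hy => (key y (hmem y hy)).2.2)
      rw [intervalIntegral.integral_const_mul, intervalIntegral.integral_const_mul,
        hFTC] at h1
      rw [intervalIntegral.integral_const_mul]
      exact h1
    have hlo : (1-ε₀)^3 * (Real.exp ((d n:ℝ)/Real.sqrt (n:ℝ) * (0 - a n))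
          - Real.exp ((d n:ℝ)/Real.sqrt (n:ℝ) * (z - a n)))
        ≤ ∫ y in z..(0:ℝ), lam n * ((d n:ℝ)/Real.sqrt (n:ℝ))
          * betaDeriv n (d n) (lam n + y/Real.sqrt (n:ℝ)) := by
      have h1 := intervalIntegral.integral_mono_on hzneg.le
        (hclo.intervalIntegrable z 0) hgI
        (fun y hy => (key y (hmem y hy)).2.1)
      rw [intervalIntegral.integral_const_mul, hFTC,
        intervalIntegral.integral_const_mul] at h1
      rw [intervalIntegral.integral_const_mul]
      exact h1
    have hMpos : 0 < Real.exp ((d n:ℝ)/Real.sqrt (n:ℝ) * (0 - a n))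
        - Real.exp ((d n:ℝ)/Real.sqrt (n:ℝ) * (z - a n)) := by
      have h1 : (d n:ℝ)/Real.sqrt (n:ℝ) * (z - a n)
          < (d n:ℝ)/Real.sqrt (n:ℝ) * (0 - a n) :=
        mul_lt_mul_of_pos_left (by linarith) hApos
      exact sub_pos.2 (Real.exp_lt_exp.2 h1)
    have h1 : (lam n * ∫ y in (0:ℝ)..z,
        betaDeriv n (d n) (lam n + y/Real.sqrt (n:ℝ))) * ((d n:ℝ)/Real.sqrt (n:ℝ))
        = -(∫ y in z..(0:ℝ), lam n * ((d n:ℝ)/Real.sqrt (n:ℝ))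
          * betaDeriv n (d n) (lam n + y/Real.sqrt (n:ℝ))) := by
      rw [intervalIntegral.integral_symm z 0, intervalIntegral.integral_const_mul]
      ring
    rw [hexp0, h1, show Real.exp ((d n:ℝ)/Real.sqrt (n:ℝ) * (z - a n))
        - Real.exp ((d n:ℝ)/Real.sqrt (n:ℝ) * (0 - a n))
        = -(Real.exp ((d n:ℝ)/Real.sqrt (n:ℝ) * (0 - a n))
          - Real.exp ((d n:ℝ)/Real.sqrt (n:ℝ) * (z - a n))) from by ring,
      neg_div_neg_eq]
    exact final_alg hMpos hε₀pos hε₀6 hε₀δ hlo hup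
  · -- z > 0
    have hzL' : z ≤ L := by
      have h1 : |z| = z := abs_of_pos hzpos
      linarith [h1 ▸ hzL]
    have hsub : Set.uIcc (0:ℝ) z ⊆ Set.Icc (-L) L := by
      rw [Set.uIcc_of_le hzpos.le]
      exact Set.Icc_subset_Icc (by linarith) hzL'
    have hgI : IntervalIntegrable (fun y => lam n * ((d n:ℝ)/Real.sqrt (n:ℝ))
        * betaDeriv n (d n) (lam n + y/Real.sqrt (n:ℝ))) MeasureTheory.volume 0 z :=
      (hgcont.mono hsub).intervalIntegrable
    have hmem : ∀ y ∈ Set.Icc (0:ℝ) z, |y| ≤ L := fun y hy =>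
      abs_le.2 ⟨by linarith [hy.1], by linarith [hy.2]⟩
    have hup : (∫ y in (0:ℝ)..z, lam n * ((d n:ℝ)/Real.sqrt (n:ℝ))
        * betaDeriv n (d n) (lam n + y/Real.sqrt (n:ℝ)))
        ≤ (1+ε₀)^3 * (Real.exp ((d n:ℝ)/Real.sqrt (n:ℝ) * (z - a n))
          - Real.exp ((d n:ℝ)/Real.sqrt (n:ℝ) * (0 - a n))) := by
      have h1 := intervalIntegral.integral_mono_on hzpos.le hgI
        (hcup.intervalIntegrable 0 z)
        (fun y hy => (key y (hmem y hy)).2.2)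
      rw [intervalIntegral.integral_const_mul, intervalIntegral.integral_const_mul,
        hFTC] at h1
      rw [intervalIntegral.integral_const_mul]
      exact h1
    have hlo : (1-ε₀)^3 * (Real.exp ((d n:ℝ)/Real.sqrt (n:ℝ) * (z - a n))
          - Real.exp ((d n:ℝ)/Real.sqrt (n:ℝ) * (0 - a n)))
        ≤ ∫ y in (0:ℝ)..z, lam n * ((d n:ℝ)/Real.sqrt (n:ℝ))
          * betaDeriv n (d n) (lam n + y/Real.sqrt (n:ℝ)) := by
      have h1 := intervalIntegral.integral_mono_on hzpos.le
        (hclo.intervalIntegrable 0 z) hgI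
        (fun y hy => (key y (hmem y hy)).2.1)
      rw [intervalIntegral.integral_const_mul, hFTC,
        intervalIntegral.integral_const_mul] at h1
      rw [intervalIntegral.integral_const_mul]
      exact h1
    have hNzpos : 0 < Real.exp ((d n:ℝ)/Real.sqrt (n:ℝ) * (z - a n))
        - Real.exp ((d n:ℝ)/Real.sqrt (n:ℝ) * (0 - a n)) := by
      have h1 : (d n:ℝ)/Real.sqrt (n:ℝ) * (0 - a n)
          < (d n:ℝ)/Real.sqrt (n:ℝ) * (z - a n) :=
        mul_lt_mul_of_pos_left (by linarith) hApos
      exact sub_pos.2 (Real.exp_lt_exp.2 h1)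
    have hDzeq : (lam n * ∫ y in (0:ℝ)..z,
        betaDeriv n (d n) (lam n + y/Real.sqrt (n:ℝ))) * ((d n:ℝ)/Real.sqrt (n:ℝ))
        = ∫ y in (0:ℝ)..z, lam n * ((d n:ℝ)/Real.sqrt (n:ℝ))
          * betaDeriv n (d n) (lam n + y/Real.sqrt (n:ℝ)) := by
      rw [intervalIntegral.integral_const_mul]
      ring
    rw [hexp0, hDzeq]
    exact final_alg hNzpos hε₀pos hε₀6 hε₀δ hlo hup
end

section
/- Let (d_n) be integers with 1 ≤ d_n ≤ n, d_n → ∞ and d_n/√n → 0, and let λ_n ∈ (0,1) with λ_n → 1. Let μ_n be the associated near fixed point and assume for some k ∈ ℕ that μ_{n,i} → (f_k)_i for every i ≥ 1 as n → ∞. Then for every M > 0 and every i ∈ {1, …, k}: sup_{0 < |z| ≤ M} | (β'_n(μ_{n,i}) z)^{−1} · λ_n ∫_{[0,z]} β'_n(μ_{n,i} + y/√n) dy − 1 | → 0 as n → ∞ (with ∫_{[0,z]} := −∫_{[z,0]} when z < 0). -/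
open Filter Topology

set_option maxHeartbeats 2000000 in
private lemma key (n dd : ℕ) (m t ε : ℝ) (hn : 1 ≤ n) (hd1 : 1 ≤ dd) (hdle : dd ≤ n)
    (hm : 3/4 ≤ m) (hd8 : (dd : ℝ) / n ≤ 1/8) (ht : |t| ≤ 1/8)
    (hε : 0 < ε) (hdr : (dd : ℝ) * (2 * |t|) ≤ Real.log (1 + ε)) :
    0 < betaDeriv n dd m ∧
      |betaDeriv n dd (m + t) - betaDeriv n dd m| ≤ ε * betaDeriv n dd m := by
  have hn0 : (0:ℝ) < n := by exact_mod_cast hn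
  have htt := abs_le.mp ht
  have hta : t ≤ |t| := le_abs_self t
  have htb : -t ≤ |t| := neg_le_abs t
  have ht0 : 0 ≤ |t| := abs_nonneg t
  set r : ℝ := 2 * |t| with hrdef
  have hr0 : 0 ≤ r := by positivity
  have hr1 : r ≤ 1/4 := by simp only [hrdef]; linarith
  have hin : ∀ i ∈ Finset.range dd, (i:ℝ)/n ≤ 1/8 ∧ 0 < 1 - (i:ℝ)/n ∧
      1/2 ≤ m - (i:ℝ)/n ∧ 0 < m + t - (i:ℝ)/n := by
    intro i hi
    have hi' : (i:ℝ) ≤ dd := by exact_mod_cast (Finset.mem_range.mp hi).le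
    have h1 : (i:ℝ)/n ≤ (dd:ℝ)/n := by gcongr
    have h2 : (i:ℝ)/n ≤ 1/8 := h1.trans hd8
    refine ⟨h2, by linarith, by linarith, by linarith⟩
  have hc1 : ((dd:ℝ) - 1)/n < m := by
    have : ((dd:ℝ) - 1)/n ≤ (dd:ℝ)/n := by gcongr; linarith
    linarith
  have hc2 : ((dd:ℝ) - 1)/n < m + t := by
    have : ((dd:ℝ) - 1)/n ≤ (dd:ℝ)/n := by gcongr; linarith
    linarith
  set A : ℕ → ℝ := fun j => ∏ i ∈ (Finset.range dd).erase j,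
      (m - (i:ℝ)/n) / (1 - (i:ℝ)/n) with hA
  set A' : ℕ → ℝ := fun j => ∏ i ∈ (Finset.range dd).erase j,
      (m + t - (i:ℝ)/n) / (1 - (i:ℝ)/n) with hA'
  have hApos : ∀ j, 0 < A j := by
    intro j
    refine Finset.prod_pos fun i hi => ?_
    obtain ⟨_, h2, h3, _⟩ := hin i (Finset.mem_of_mem_erase hi)
    exact div_pos (by linarith) h2
  have hcard : ∀ j, ((Finset.range dd).erase j).card ≤ dd := fun j =>
    (Finset.card_le_card (Finset.erase_subset _ _)).trans_eq (Finset.card_range dd)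
  have hup : ∀ j, A' j ≤ (1 + r) ^ dd * A j := by
    intro j
    calc A' j ≤ ∏ i ∈ (Finset.range dd).erase j,
        (1 + r) * ((m - (i:ℝ)/n) / (1 - (i:ℝ)/n)) := by
          refine Finset.prod_le_prod (fun i hi => ?_) (fun i hi => ?_)
          · obtain ⟨_, h2, _, h4⟩ := hin i (Finset.mem_of_mem_erase hi)
            positivity
          · obtain ⟨_, h2, h3, h4⟩ := hin i (Finset.mem_of_mem_erase hi)
            rw [mul_div_assoc']
            have hnum : m + t - (i:ℝ)/n ≤ (1 + r) * (m - (i:ℝ)/n) := by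
              have := mul_le_mul_of_nonneg_left h3 hr0
              nlinarith
            gcongr
      _ = (1 + r) ^ ((Finset.range dd).erase j).card * A j := by
            rw [Finset.prod_mul_distrib, Finset.prod_const]
      _ ≤ (1 + r) ^ dd * A j := by
            refine mul_le_mul_of_nonneg_right ?_ (hApos j).le
            exact pow_le_pow_right₀ (by linarith) (hcard j)
  have hlo : ∀ j, (1 - r) ^ dd * A j ≤ A' j := by
    intro j
    have step1 : ∏ i ∈ (Finset.range dd).erase j,
        (1 - r) * ((m - (i:ℝ)/n) / (1 - (i:ℝ)/n)) ≤ A' j := by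
      refine Finset.prod_le_prod (fun i hi => ?_) (fun i hi => ?_)
      · obtain ⟨_, h2, h3, _⟩ := hin i (Finset.mem_of_mem_erase hi)
        have : 0 ≤ (m - (i:ℝ)/n) / (1 - (i:ℝ)/n) := by positivity
        nlinarith
      · obtain ⟨_, h2, h3, h4⟩ := hin i (Finset.mem_of_mem_erase hi)
        rw [mul_div_assoc']
        have hnum : (1 - r) * (m - (i:ℝ)/n) ≤ m + t - (i:ℝ)/n := by
          have := mul_le_mul_of_nonneg_left h3 hr0
          nlinarith
        gcongr
    have step2 : (1 - r) ^ dd * A j ≤ (1 - r) ^ ((Finset.range dd).erase j).card * A j := by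
      refine mul_le_mul_of_nonneg_right ?_ (hApos j).le
      exact pow_le_pow_of_le_one (by linarith) (by linarith) (hcard j)
    calc (1 - r) ^ dd * A j ≤ (1 - r) ^ ((Finset.range dd).erase j).card * A j := step2
      _ = ∏ i ∈ (Finset.range dd).erase j,
          (1 - r) * ((m - (i:ℝ)/n) / (1 - (i:ℝ)/n)) := by
            rw [Finset.prod_mul_distrib, Finset.prod_const]
      _ ≤ A' j := step1
  have eqm : betaDeriv n dd m = ∑ j ∈ Finset.range dd, (1 - (j:ℝ)/n)⁻¹ * A j := by
    simp only [betaDeriv, if_pos hc1, hA]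
  have eqt : betaDeriv n dd (m + t) = ∑ j ∈ Finset.range dd, (1 - (j:ℝ)/n)⁻¹ * A' j := by
    simp only [betaDeriv, if_pos hc2, hA']
  rw [eqm, eqt]
  have hcpos : ∀ j ∈ Finset.range dd, 0 < (1 - (j:ℝ)/n)⁻¹ := by
    intro j hj
    exact inv_pos.mpr (hin j hj).2.1
  set S : ℝ := ∑ j ∈ Finset.range dd, (1 - (j:ℝ)/n)⁻¹ * A j with hS
  set S' : ℝ := ∑ j ∈ Finset.range dd, (1 - (j:ℝ)/n)⁻¹ * A' j with hS'
  have hS0 : 0 < S := by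
    refine Finset.sum_pos (fun j hj => mul_pos (hcpos j hj) (hApos j)) ?_
    exact ⟨0, Finset.mem_range.mpr hd1⟩
  have hsumup : S' ≤ (1 + r) ^ dd * S := by
    rw [hS, Finset.mul_sum]
    refine Finset.sum_le_sum fun j hj => ?_
    have := mul_le_mul_of_nonneg_left (hup j) (hcpos j hj).le
    calc (1 - (j:ℝ)/n)⁻¹ * A' j ≤ (1 - (j:ℝ)/n)⁻¹ * ((1 + r) ^ dd * A j) := this
      _ = (1 + r) ^ dd * ((1 - (j:ℝ)/n)⁻¹ * A j) := by ring
  have hsumlo : (1 - r) ^ dd * S ≤ S' := by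
    rw [hS, Finset.mul_sum]
    refine Finset.sum_le_sum fun j hj => ?_
    have := mul_le_mul_of_nonneg_left (hlo j) (hcpos j hj).le
    calc (1 - r) ^ dd * ((1 - (j:ℝ)/n)⁻¹ * A j)
        = (1 - (j:ℝ)/n)⁻¹ * ((1 - r) ^ dd * A j) := by ring
      _ ≤ (1 - (j:ℝ)/n)⁻¹ * A' j := this
  have hexp : (1 + r) ^ dd ≤ 1 + ε := by
    calc (1 + r) ^ dd ≤ (Real.exp r) ^ dd :=
          pow_le_pow_left₀ (by linarith) (by linarith [Real.add_one_le_exp r]) dd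
      _ = Real.exp ((dd : ℝ) * r) := by rw [← Real.exp_nat_mul]
      _ ≤ Real.exp (Real.log (1 + ε)) := Real.exp_le_exp.mpr hdr
      _ = 1 + ε := Real.exp_log (by linarith)
  have hlog : Real.log (1 + ε) ≤ ε := by
    have := Real.log_le_sub_one_of_pos (show (0:ℝ) < 1 + ε by linarith)
    linarith
  have hber : 1 - ε ≤ (1 - r) ^ dd := by
    have h2 : 1 + (dd : ℝ) * (-r) ≤ (1 + (-r)) ^ dd :=
      one_add_mul_le_pow (by linarith : (-2:ℝ) ≤ -r) dd
    have h3 : (1 + (-r)) ^ dd = (1 - r) ^ dd := by ring_nf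
    rw [h3] at h2
    have h4 : (dd : ℝ) * (-r) = -((dd:ℝ) * r) := by ring
    rw [h4] at h2
    linarith only [h2, hdr, hlog]
  clear_value S' S A' A
  clear hS hS' hA hA' eqm eqt hup hlo hin hApos hcard hcpos
  constructor
  · exact hS0
  · rw [abs_le]
    have b1 : S' ≤ (1 + ε) * S := by nlinarith [hsumup, hexp, hS0, pow_nonneg (by linarith : (0:ℝ) ≤ 1 + r) dd]
    have b2 : (1 - ε) * S ≤ S' := by nlinarith [hsumlo, hber, hS0]
    constructor
    · nlinarith [b2, hS0]
    · nlinarith [b1, hS0]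

set_option maxHeartbeats 1000000 in
/-- Lemma 7.1: if `d_n → ∞`, `d_n/√n → 0`, `λ_n ∈ (0,1)`, `λ_n → 1` and
`μ_{n,i} → (f_k)_i` for every `i ≥ 1` (with `(f_k)_i = 1` for `i ≤ k`, else `0`),
then for every `M > 0` and `i ∈ {1,…,k}`,
`sup_{0<|z|≤M} |(β'_n(μ_{n,i}) z)⁻¹ λ_n ∫_{[0,z]} β'_n(μ_{n,i} + y/√n) dy − 1| → 0`. -/
theorem stmt14 (d : ℕ → ℕ) (hd : ∀ n : ℕ, 1 ≤ n → 1 ≤ d n ∧ d n ≤ n)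
    (hdtop : Tendsto d atTop atTop)
    (hdn : Tendsto (fun n => (d n : ℝ) / Real.sqrt (n : ℝ)) atTop (𝓝 0))
    (lam : ℕ → ℝ) (hlam : ∀ n, lam n ∈ Set.Ioo (0 : ℝ) 1)
    (hlam1 : Tendsto lam atTop (𝓝 1))
    (k : ℕ) (hk : 1 ≤ k)
    (hmu : ∀ i : ℕ, Tendsto (fun n => muSeq n (d n) (lam n) i) atTop
      (𝓝 (if i < k then (1 : ℝ) else 0)))
    (M : ℝ) (hM : 0 < M) (i : ℕ) (hi1 : 1 ≤ i) (hik : i ≤ k) :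
    ∀ δ > 0, ∀ᶠ n in atTop, ∀ z : ℝ, 0 < |z| → |z| ≤ M →
      |(betaDeriv n (d n) (muSeq n (d n) (lam n) (i - 1)) * z)⁻¹ *
          (lam n * ∫ y in (0 : ℝ)..z,
            betaDeriv n (d n)
              (muSeq n (d n) (lam n) (i - 1) + y / Real.sqrt (n : ℝ))) - 1| < δ := by
  intro δ hδ
  set ε : ℝ := δ / 2 with hεdef
  have hε : 0 < ε := by positivity
  have hik' : i - 1 < k := by omega
  have hmu' := hmu (i - 1)
  rw [if_pos hik'] at hmu'
  have hL : 0 < Real.log (1 + ε) := Real.log_pos (by linarith)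
  have E1 : ∀ᶠ n : ℕ in atTop, 1 ≤ n := eventually_ge_atTop 1
  have E2 : ∀ᶠ n in atTop, 3/4 < muSeq n (d n) (lam n) (i - 1) :=
    hmu'.eventually (lt_mem_nhds (by norm_num : (3:ℝ)/4 < 1))
  have E3 : ∀ᶠ n in atTop, (d n : ℝ) / Real.sqrt n < 1/8 :=
    hdn.eventually (gt_mem_nhds (by norm_num : (0:ℝ) < 1/8))
  have E4 : ∀ᶠ n in atTop, (d n : ℝ) / Real.sqrt n < Real.log (1 + ε) / (2 * M) :=
    hdn.eventually (gt_mem_nhds (by positivity))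
  have E5 : ∀ᶠ n in atTop, (d n : ℝ) / Real.sqrt n < 1 / (8 * M) :=
    hdn.eventually (gt_mem_nhds (by positivity))
  have E6 : ∀ᶠ n in atTop, |lam n - 1| < δ / 2 := by
    have := Metric.tendsto_nhds.mp hlam1 (δ / 2) (by positivity)
    simpa [Real.dist_eq] using this
  filter_upwards [E1, E2, E3, E4, E5, E6] with n hn1 hn2 hn3 hn4 hn5 hn6
  intro z hz hzM
  obtain ⟨hd1, hdle⟩ := hd n hn1
  set dd := d n with hdd
  set m := muSeq n dd (lam n) (i - 1) with hm
  set L := lam n with hLdef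
  set s := Real.sqrt n with hsdef
  have hn0 : (0:ℝ) < n := by exact_mod_cast hn1
  have hs : 0 < s := Real.sqrt_pos.mpr hn0
  have hsn : s ≤ n := by
    rw [hsdef, Real.sqrt_le_left hn0.le]
    nlinarith [hn0, (by exact_mod_cast hn1 : (1:ℝ) ≤ n)]
  have hdd0 : (0:ℝ) ≤ dd := Nat.cast_nonneg _
  have hdn8 : (dd : ℝ) / n ≤ 1/8 :=
    (div_le_div_of_nonneg_left hdd0 hs hsn).trans hn3.le
  have hdd1 : (1:ℝ) ≤ dd := by exact_mod_cast hd1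
  have hMs : M / s ≤ 1/8 := by
    have h1 : M * ((dd:ℝ) / s) ≤ M * (1 / (8 * M)) := mul_le_mul_of_nonneg_left hn5.le hM.le
    have h2 : M / s ≤ M * ((dd:ℝ) / s) := by
      rw [div_eq_mul_inv, div_eq_mul_inv]
      have h2a : 0 < s⁻¹ := inv_pos.mpr hs
      nlinarith [mul_nonneg (mul_nonneg hM.le h2a.le) (by linarith : (0:ℝ) ≤ (dd:ℝ) - 1)]
    have h3 : M * (1 / (8 * M)) = 1/8 := by field_simp
    linarith
  have hkey : ∀ t : ℝ, |t| ≤ M / s → 0 < betaDeriv n dd m ∧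
      |betaDeriv n dd (m + t) - betaDeriv n dd m| ≤ ε * betaDeriv n dd m := by
    intro t htle
    refine key n dd m t ε hn1 hd1 hdle (by linarith) hdn8 (htle.trans hMs) hε ?_
    have h1 : (dd:ℝ) * (2 * |t|) ≤ (dd:ℝ) * (2 * (M / s)) :=
      mul_le_mul_of_nonneg_left (by linarith) hdd0
    have h2 : (dd:ℝ) * (2 * (M / s)) = 2 * M * ((dd:ℝ) / s) := by ring
    have h3 : 2 * M * ((dd:ℝ) / s) ≤ 2 * M * (Real.log (1 + ε) / (2 * M)) :=
      mul_le_mul_of_nonneg_left hn4.le (by positivity)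
    have h4 : 2 * M * (Real.log (1 + ε) / (2 * M)) = Real.log (1 + ε) := by field_simp
    linarith
  have hMs0 : (0:ℝ) ≤ M / s := by positivity
  have hD : 0 < betaDeriv n dd m := (hkey 0 (by simpa using hMs0)).1
  set D := betaDeriv n dd m with hDdef
  set g : ℝ → ℝ := fun y => ∑ j ∈ Finset.range dd, (1 - (j:ℝ)/n)⁻¹ *
      ∏ i' ∈ (Finset.range dd).erase j, (m + y/s - (i':ℝ)/n) / (1 - (i':ℝ)/n) with hg
  have hgc : Continuous g := by
    rw [hg]
    refine continuous_finset_sum _ fun j _ => Continuous.mul continuous_const ?_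
    refine continuous_finset_prod _ fun i' _ => ?_
    exact ((continuous_const.add (continuous_id.div_const s)).sub continuous_const).div_const _
  have heq : ∀ y : ℝ, |y| ≤ M → betaDeriv n dd (m + y/s) = g y := by
    intro y hy
    have h2 := abs_le.mp hy
    have hyM : -(M/s) ≤ y/s := by
      rw [← neg_div]
      gcongr
      exact h2.1
    have hcond : ((dd:ℝ) - 1)/n < m + y/s := by
      have ha : ((dd:ℝ) - 1)/n ≤ (dd:ℝ)/n := by gcongr <;> linarith
      linarith [hMs, hdn8, hn2]
    simp only [betaDeriv, hg]
    rw [if_pos hcond]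
  have habs : ∀ y ∈ Set.uIcc (0:ℝ) z, |y| ≤ M := by
    intro y hy
    rw [Set.mem_uIcc] at hy
    have hza := le_abs_self z
    have hzb := neg_abs_le z
    rcases hy with ⟨h1, h2⟩ | ⟨h1, h2⟩ <;> rw [abs_le] <;> constructor <;> linarith
  have hIeq : (∫ y in (0:ℝ)..z, betaDeriv n dd (m + y/s)) = ∫ y in (0:ℝ)..z, g y :=
    intervalIntegral.integral_congr fun y hy => heq y (habs y hy)
  set I := ∫ y in (0:ℝ)..z, g y with hI
  have hsub : (∫ y in (0:ℝ)..z, (g y - D)) = I - z * D := by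
    rw [intervalIntegral.integral_sub (hgc.intervalIntegrable _ _) intervalIntegrable_const,
      intervalIntegral.integral_const]
    simp [smul_eq_mul]
    exact hI.symm
  have hb : ‖∫ y in (0:ℝ)..z, (g y - D)‖ ≤ ε * D * |z - 0| := by
    refine intervalIntegral.norm_integral_le_of_norm_le_const fun x hx => ?_
    have hxM : |x| ≤ M := habs x (Set.uIoc_subset_uIcc hx)
    have hxs : |x/s| ≤ M/s := by
      rw [abs_div, abs_of_pos hs]
      gcongr
    have h5 := (hkey (x/s) hxs).2
    rw [heq x hxM] at h5
    rw [Real.norm_eq_abs]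
    exact h5
  have hIb : |I - z * D| ≤ ε * D * |z| := by
    rw [hsub, Real.norm_eq_abs, sub_zero] at hb
    exact hb
  have hzne : z ≠ 0 := abs_pos.mp hz
  have hLI := hlam n
  rw [Set.mem_Ioo] at hLI
  obtain ⟨hL0, hL1⟩ := hLI
  rw [hIeq]
  have hDz : D * z ≠ 0 := mul_ne_zero hD.ne' hzne
  have hrw : (D * z)⁻¹ * (L * I) - 1 = (L * I - D * z) / (D * z) := by
    field_simp
  rw [hrw, abs_div, div_lt_iff₀ (abs_pos.mpr hDz)]
  have e1 : |L * I - D * z| ≤ L * |I - z * D| + |L - 1| * |D * z| := by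
    have h0 : L * I - D * z = L * (I - z * D) + (L - 1) * (D * z) := by ring
    rw [h0]
    refine (abs_add_le _ _).trans ?_
    rw [abs_mul, abs_mul, abs_of_pos hL0]
  have hDzpos : 0 < |D * z| := abs_pos.mpr hDz
  have hDzeq : |D * z| = D * |z| := by rw [abs_mul, abs_of_pos hD]
  have c1 : L * |I - z * D| ≤ ε * D * |z| := by
    nlinarith [abs_nonneg (I - z * D), hIb, hL0, hL1]
  have c2 : |L - 1| * |D * z| < (δ/2) * |D * z| := mul_lt_mul_of_pos_right hn6 hDzpos
  calc |L * I - D * z| ≤ L * |I - z * D| + |L - 1| * |D * z| := e1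
    _ < ε * D * |z| + (δ/2) * |D * z| := by linarith
    _ = δ * |D * z| := by rw [hDzeq, hεdef]; ring
end

section
/- Fix T > 0. Let f, g, M : [0,T] → ℝ be bounded measurable functions, and assume M is right continuous and of bounded variation on [0,T]. Let τ ≥ 0 and suppose m := inf_{s ∈ [0, T∧τ]} f(s) > 0. Let z : [0,T] → ℝ be a bounded measurable function satisfying, for every t ∈ [0,T], z(t) = z(0) − ∫₀^t f(s) z(s) ds + ∫₀^t g(s) ds + M(t). Then for every t ∈ [0, T∧τ]: |z(t)| ≤ (sup_{s ∈ [0,T∧τ]} |g(s)|)/m + 2 sup_{s ∈ [0,T∧τ]} |M(s)| + e^{−mt} ( |z(0)| + |M(0)| ). -/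
open Filter Topology MeasureTheory Set intervalIntegral Nat

lemma aux_integrableOn_of_bounded {f : ℝ → ℝ} (hf : Measurable f) {B a b : ℝ}
    (h : ∀ s ∈ Set.Icc a b, |f s| ≤ B) : IntegrableOn f (Set.Icc a b) := by
  refine Integrable.mono' (integrable_const B) hf.aestronglyMeasurable.restrict ?_
  filter_upwards [ae_restrict_mem measurableSet_Icc] with s hs
  simpa using h s hs

lemma aux_integrableOn_mul_bound {f G : ℝ → ℝ} {S : Set ℝ} (hS : MeasurableSet S)
    (hfi : IntegrableOn f S) (hGm : Measurable G) {C : ℝ}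
    (hC : ∀ s ∈ S, |G s| ≤ C) : IntegrableOn (fun s => f s * G s) S := by
  refine Integrable.mono' (hfi.norm.mul_const C)
    (hfi.aestronglyMeasurable.mul hGm.aestronglyMeasurable.restrict) ?_
  filter_upwards [ae_restrict_mem hS] with s hs
  have := hC s hs
  have h0 : (0:ℝ) ≤ |f s| := abs_nonneg _
  calc ‖f s * G s‖ = |f s| * |G s| := abs_mul _ _
    _ ≤ |f s| * C := by exact mul_le_mul_of_nonneg_left this h0
    _ = ‖f s‖ * C := rfl

lemma aux_fubini_triangle {b : ℝ} {Φ Ψ : ℝ → ℝ}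
    (hΦm : Measurable Φ) (hΨm : Measurable Ψ)
    (hΦ : IntegrableOn Φ (Set.Ioc 0 b)) (hΨ : IntegrableOn Ψ (Set.Ioc 0 b)) :
    ∫ s in Set.Ioc 0 b, Φ s * ∫ r in Set.Ioc 0 s, Ψ r
      = ∫ r in Set.Ioc 0 b, Ψ r * ∫ s in Set.Ioc r b, Φ s := by
  set μ := volume.restrict (Set.Ioc (0:ℝ) b) with hμ
  set K : ℝ → ℝ → ℝ := fun s r => if r ≤ s then Φ s * Ψ r else 0 with hK
  have hKint : Integrable (Function.uncurry K) (μ.prod μ) := by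
    have h1 : Integrable (fun p : ℝ × ℝ => Φ p.1 * Ψ p.2) (μ.prod μ) :=
      Integrable.mul_prod hΦ hΨ
    have hset : MeasurableSet {p : ℝ × ℝ | p.2 ≤ p.1} :=
      measurableSet_le measurable_snd measurable_fst
    have : Function.uncurry K =
        Set.indicator {p : ℝ × ℝ | p.2 ≤ p.1} (fun p => Φ p.1 * Ψ p.2) := by
      funext p
      simp only [Function.uncurry, hK, Set.indicator_apply, Set.mem_setOf_eq]
    rw [this]
    exact h1.indicator hset
  have swap : ∫ s, ∫ r, K s r ∂μ ∂μ = ∫ r, ∫ s, K s r ∂μ ∂μ :=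
    integral_integral_swap hKint
  have lhs : ∫ s, ∫ r, K s r ∂μ ∂μ
      = ∫ s in Set.Ioc 0 b, Φ s * ∫ r in Set.Ioc 0 s, Ψ r := by
    rw [hμ]
    refine setIntegral_congr_fun measurableSet_Ioc (fun s hs => ?_)
    have : (fun r => K s r) = Set.indicator (Set.Iic s) (fun r => Φ s * Ψ r) := by
      funext r; simp only [hK, Set.indicator_apply, Set.mem_Iic]
    rw [this, MeasureTheory.integral_indicator measurableSet_Iic,
      Measure.restrict_restrict measurableSet_Iic]
    have hset : Set.Iic s ∩ Set.Ioc 0 b = Set.Ioc 0 s := by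
      ext r
      simp only [Set.mem_inter_iff, Set.mem_Iic, Set.mem_Ioc]
      exact ⟨fun ⟨h1, h2, h3⟩ => ⟨h2, h1⟩, fun ⟨h1, h2⟩ => ⟨h2, h1, h2.trans hs.2⟩⟩
    rw [hset, MeasureTheory.integral_const_mul]
  have rhs : ∫ r, ∫ s, K s r ∂μ ∂μ
      = ∫ r in Set.Ioc 0 b, Ψ r * ∫ s in Set.Ioc r b, Φ s := by
    rw [hμ]
    refine setIntegral_congr_fun measurableSet_Ioc (fun r hr => ?_)
    have : (fun s => K s r) = Set.indicator (Set.Ici r) (fun s => Φ s * Ψ r) := by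
      funext s; simp only [hK, Set.indicator_apply, Set.mem_Ici]
    rw [this, MeasureTheory.integral_indicator measurableSet_Ici,
      Measure.restrict_restrict measurableSet_Ici]
    have hset : Set.Ici r ∩ Set.Ioc 0 b = Set.Icc r b := by
      ext s
      simp only [Set.mem_inter_iff, Set.mem_Ici, Set.mem_Ioc, Set.mem_Icc]
      exact ⟨fun ⟨h1, _, h3⟩ => ⟨h1, h3⟩, fun ⟨h1, h2⟩ => ⟨h1, lt_of_lt_of_le hr.1 h1, h2⟩⟩
    rw [hset, integral_Icc_eq_integral_Ioc, ← MeasureTheory.integral_const_mul]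
    exact setIntegral_congr_fun measurableSet_Ioc (fun s _ => mul_comm _ _)
  rw [← lhs, ← rhs, swap]

lemma aux_power_primitive {f : ℝ → ℝ} (hfm : Measurable f) (hfi : Integrable f) :
    ∀ n : ℕ, ∀ t : ℝ, 0 ≤ t →
      ∫ s in Set.Ioc 0 t, f s * (∫ r in Set.Ioc 0 s, f r) ^ n
        = (∫ r in Set.Ioc 0 t, f r) ^ (n + 1) / (n + 1) := by
  have hP : Continuous (fun u => ∫ r in (0:ℝ)..u, f r) :=
    intervalIntegral.continuous_primitive (fun a b => hfi.intervalIntegrable) 0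
  set P : ℝ → ℝ := fun u => ∫ r in (0:ℝ)..u, f r with hPdef
  have hPI : ∀ u : ℝ, 0 ≤ u → (∫ r in Set.Ioc 0 u, f r) = P u := fun u hu =>
    (intervalIntegral.integral_of_le hu).symm
  have hPm : Measurable P := hP.measurable
  intro n
  induction n with
  | zero =>
    intro t ht
    rw [hPI t ht]
    simp only [pow_zero, mul_one, pow_one, Nat.cast_zero, zero_add, div_one]
    exact hPI t ht
  | succ n ih =>
    intro t ht
    -- bound for P on [0, t]
    obtain ⟨C, hC⟩ : ∃ C, ∀ u ∈ Set.Icc 0 t, |P u| ≤ C := by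
      obtain ⟨C, hC⟩ := (isCompact_Icc (a := (0:ℝ)) (b := t)).exists_bound_of_continuousOn
        hP.continuousOn
      exact ⟨C, fun u hu => hC u hu⟩
    have hint : ∀ k : ℕ, ∀ u : ℝ, u ≤ t →
        IntegrableOn (fun s => f s * P s ^ k) (Set.Ioc 0 u) := by
      intro k u hu
      refine aux_integrableOn_mul_bound measurableSet_Ioc hfi.integrableOn
        (hPm.pow_const k) (C := |C| ^ k) (fun s hs => ?_)
      have hs' : s ∈ Set.Icc 0 t := ⟨le_of_lt hs.1, hs.2.trans hu⟩
      calc |P s ^ k| = |P s| ^ k := abs_pow _ _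
        _ ≤ |C| ^ k := pow_le_pow_left₀ (abs_nonneg _) ((hC s hs').trans (le_abs_self C)) k
    have ihP' : ∀ u : ℝ, 0 ≤ u →
        ∫ r in Set.Ioc 0 u, f r * P r ^ n = P u ^ (n + 1) / ((n:ℝ) + 1) := by
      intro u hu
      have h1 := ih u hu
      rw [hPI u hu] at h1
      rw [← h1]
      refine setIntegral_congr_fun measurableSet_Ioc (fun r hr => ?_)
      rw [hPI r (le_of_lt hr.1)]
    have step1 : ∫ s in Set.Ioc 0 t, f s * (∫ r in Set.Ioc 0 s, f r) ^ (n + 1)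
        = ((n:ℝ) + 1) * ∫ s in Set.Ioc 0 t, f s * ∫ r in Set.Ioc 0 s, f r * P r ^ n := by
      rw [← MeasureTheory.integral_const_mul]
      refine setIntegral_congr_fun measurableSet_Ioc (fun s hs => ?_)
      have h0s : (0:ℝ) ≤ s := le_of_lt hs.1
      rw [ihP' s h0s, hPI s h0s]
      have hne : ((n:ℝ) + 1) ≠ 0 := by positivity
      field_simp
      try ring
    have step2 : ∫ s in Set.Ioc 0 t, f s * ∫ r in Set.Ioc 0 s, f r * P r ^ n
        = ∫ r in Set.Ioc 0 t, (f r * P r ^ n) * ∫ s in Set.Ioc r t, f s :=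
      aux_fubini_triangle hfm (hfm.mul (hPm.pow_const n)) hfi.integrableOn (hint n t le_rfl)
    have hadj : ∀ r ∈ Set.Ioc 0 t, (∫ s in Set.Ioc r t, f s) = P t - P r := by
      intro r hr
      have : (∫ s in Set.Ioc r t, f s) = ∫ s in r..t, f s :=
        (intervalIntegral.integral_of_le hr.2).symm
      rw [this, hPdef]
      rw [eq_sub_iff_add_eq, add_comm]
      exact intervalIntegral.integral_add_adjacent_intervals
        hfi.intervalIntegrable hfi.intervalIntegrable
    have step3 : ∫ r in Set.Ioc 0 t, (f r * P r ^ n) * ∫ s in Set.Ioc r t, f s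
        = P t * (∫ r in Set.Ioc 0 t, f r * P r ^ n)
          - ∫ r in Set.Ioc 0 t, f r * P r ^ (n + 1) := by
      rw [← MeasureTheory.integral_const_mul, ← integral_sub
        ((hint n t le_rfl).const_mul (P t)) (hint (n+1) t le_rfl)]
      refine setIntegral_congr_fun measurableSet_Ioc (fun r hr => ?_)
      rw [hadj r hr]; ring
    have hLHS : ∫ s in Set.Ioc 0 t, f s * (∫ r in Set.Ioc 0 s, f r) ^ (n + 1)
        = ∫ s in Set.Ioc 0 t, f s * P s ^ (n + 1) := by
      refine setIntegral_congr_fun measurableSet_Ioc (fun s hs => ?_)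
      rw [hPI s (le_of_lt hs.1)]
    have key : (∫ s in Set.Ioc 0 t, f s * P s ^ (n + 1))
        = ((n:ℝ) + 1) * (P t * (P t ^ (n + 1) / ((n:ℝ) + 1))
            - ∫ s in Set.Ioc 0 t, f s * P s ^ (n + 1)) := by
      conv_lhs => rw [← hLHS]
      rw [step1, step2, step3, ihP' t ht]
    have hne : ((n:ℝ) + 1) ≠ 0 := by positivity
    have hA' : (∫ s in Set.Ioc 0 t, f s * P s ^ (n + 1)) = P t ^ (n + 2) / ((n:ℝ) + 2) := by
      generalize hA : (∫ s in Set.Ioc 0 t, f s * P s ^ (n + 1)) = A at key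
      have h2 : ((n:ℝ) + 2) ≠ 0 := by positivity
      field_simp at key ⊢
      linear_combination key
    rw [hLHS, hA', hPI t ht]
    push_cast
    ring_nf

lemma aux_exp_tsum (x : ℝ) : HasSum (fun n : ℕ => x ^ n / n !) (Real.exp x) := by
  rw [Real.exp_eq_exp_ℝ]
  exact NormedSpace.expSeries_div_hasSum_exp x

lemma aux_exp_primitive {f : ℝ → ℝ} (hfm : Measurable f) (hfi : Integrable f)
    {t : ℝ} (ht : 0 ≤ t) :
    ∫ s in Set.Ioc 0 t, f s * Real.exp (∫ r in Set.Ioc 0 s, f r)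
      = Real.exp (∫ r in Set.Ioc 0 t, f r) - 1 := by
  have hP : Continuous (fun u => ∫ r in (0:ℝ)..u, f r) :=
    intervalIntegral.continuous_primitive (fun a b => hfi.intervalIntegrable) 0
  set P : ℝ → ℝ := fun u => ∫ r in (0:ℝ)..u, f r with hPdef
  have hPI : ∀ u : ℝ, 0 ≤ u → (∫ r in Set.Ioc 0 u, f r) = P u := fun u hu =>
    (intervalIntegral.integral_of_le hu).symm
  have hPm : Measurable P := hP.measurable
  obtain ⟨C, hC⟩ := (isCompact_Icc (a := (0:ℝ)) (b := t)).exists_bound_of_continuousOn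
    hP.continuousOn
  have hC0 : 0 ≤ C := le_trans (norm_nonneg (P 0)) (hC 0 ⟨le_rfl, ht⟩)
  set μ := volume.restrict (Set.Ioc (0:ℝ) t) with hμ
  -- HasSum of integrals via dominated convergence
  have hsum1 : HasSum (fun n : ℕ => ∫ s in Set.Ioc 0 t, f s * (P s ^ n / n !))
      (∫ s in Set.Ioc 0 t, f s * Real.exp (P s)) := by
    refine MeasureTheory.hasSum_integral_of_dominated_convergence
      (bound := fun n s => |f s| * (C ^ n / n !)) ?_ ?_ ?_ ?_ ?_
    · intro n
      exact ((hfm.mul ((hPm.pow_const n).div_const _)).aestronglyMeasurable).restrict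
    · intro n
      filter_upwards [ae_restrict_mem measurableSet_Ioc] with s hs
      have hs' : s ∈ Set.Icc 0 t := ⟨le_of_lt hs.1, hs.2⟩
      have h1 : |P s| ≤ C := hC s hs'
      have : |P s ^ n / n !| ≤ C ^ n / n ! := by
        rw [abs_div, abs_pow, abs_of_nonneg (by positivity : (0:ℝ) ≤ (n ! : ℝ))]
        gcongr <;> first | exact abs_nonneg _ | exact h1
      calc ‖f s * (P s ^ n / n !)‖ = |f s| * |P s ^ n / n !| := abs_mul _ _
        _ ≤ |f s| * (C ^ n / n !) := mul_le_mul_of_nonneg_left this (abs_nonneg _)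
    · filter_upwards with s
      exact (Real.summable_pow_div_factorial C).mul_left _
    · have : (fun s => ∑' n : ℕ, |f s| * (C ^ n / n !)) = fun s => |f s| * Real.exp C := by
        funext s
        rw [tsum_mul_left, (aux_exp_tsum C).tsum_eq]
      rw [this]
      exact (hfi.restrict.norm.mul_const _)
    · filter_upwards with s
      exact ((aux_exp_tsum (P s)).mul_left (f s))
  -- identify the terms
  have hterm : ∀ n : ℕ, (∫ s in Set.Ioc 0 t, f s * (P s ^ n / n !))
      = P t ^ (n + 1) / (n + 1) ! := by
    intro n
    have h1 : (∫ s in Set.Ioc 0 t, f s * (P s ^ n / n !))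
        = (∫ s in Set.Ioc 0 t, f s * P s ^ n) / n ! := by
      rw [← MeasureTheory.integral_div]
      refine setIntegral_congr_fun measurableSet_Ioc (fun s _ => ?_)
      rw [mul_div_assoc]
    have h2 := aux_power_primitive hfm hfi n t ht
    have h3 : (∫ s in Set.Ioc 0 t, f s * P s ^ n)
        = (∫ s in Set.Ioc 0 t, f s * (∫ r in Set.Ioc 0 s, f r) ^ n) := by
      refine setIntegral_congr_fun measurableSet_Ioc (fun s hs => ?_)
      rw [hPI s (le_of_lt hs.1)]
    rw [h1, h3, h2, hPI t ht, Nat.factorial_succ]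
    push_cast
    field_simp
    try ring
  have hsum2 : HasSum (fun n : ℕ => P t ^ (n + 1) / (n + 1) !) (Real.exp (P t) - 1) := by
    have h := aux_exp_tsum (P t)
    have := (hasSum_nat_add_iff' (f := fun n : ℕ => P t ^ n / n !) 1).mpr h
    simpa using this
  have : (fun n : ℕ => ∫ s in Set.Ioc 0 t, f s * (P s ^ n / n !))
      = fun n : ℕ => P t ^ (n + 1) / (n + 1) ! := funext hterm
  rw [this] at hsum1
  have hfinal := hsum1.unique hsum2
  have hL : (∫ s in Set.Ioc 0 t, f s * Real.exp (∫ r in Set.Ioc 0 s, f r))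
      = ∫ s in Set.Ioc 0 t, f s * Real.exp (P s) := by
    refine setIntegral_congr_fun measurableSet_Ioc (fun s hs => ?_)
    rw [hPI s (le_of_lt hs.1)]
  rw [hL, hfinal, hPI t ht]

lemma aux_voc {f h : ℝ → ℝ} (hfm : Measurable f) (hfi : Integrable f)
    (hhm : Measurable h) (hhi : Integrable h) (c : ℝ) {t : ℝ} (ht : 0 ≤ t) :
    Real.exp (∫ r in Set.Ioc 0 t, f r) * (c + ∫ s in Set.Ioc 0 t, h s)
      = c + ∫ s in Set.Ioc 0 t, Real.exp (∫ r in Set.Ioc 0 s, f r) *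
          (h s + f s * (c + ∫ r in Set.Ioc 0 s, h r)) := by
  have hP : Continuous (fun u => ∫ r in (0:ℝ)..u, f r) :=
    intervalIntegral.continuous_primitive (fun a b => hfi.intervalIntegrable) 0
  set P : ℝ → ℝ := fun u => ∫ r in (0:ℝ)..u, f r with hPdef
  have hPI : ∀ u : ℝ, 0 ≤ u → (∫ r in Set.Ioc 0 u, f r) = P u := fun u hu =>
    (intervalIntegral.integral_of_le hu).symm
  have hQ : Continuous (fun u => ∫ r in (0:ℝ)..u, h r) :=
    intervalIntegral.continuous_primitive (fun a b => hhi.intervalIntegrable) 0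
  set Q : ℝ → ℝ := fun u => ∫ r in (0:ℝ)..u, h r with hQdef
  have hQI : ∀ u : ℝ, 0 ≤ u → (∫ r in Set.Ioc 0 u, h r) = Q u := fun u hu =>
    (intervalIntegral.integral_of_le hu).symm
  set E : ℝ → ℝ := fun u => Real.exp (P u) with hEdef
  have hE : Continuous E := Real.continuous_exp.comp hP
  have hEm : Measurable E := hE.measurable
  have hQm : Measurable Q := hQ.measurable
  -- bounds on [0, t]
  obtain ⟨CE, hCE⟩ := (isCompact_Icc (a := (0:ℝ)) (b := t)).exists_bound_of_continuousOn
    hE.continuousOn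
  obtain ⟨CQ, hCQ⟩ := (isCompact_Icc (a := (0:ℝ)) (b := t)).exists_bound_of_continuousOn
    hQ.continuousOn
  have hmem : ∀ s : ℝ, s ∈ Set.Ioc 0 t → s ∈ Set.Icc 0 t := fun s hs =>
    ⟨le_of_lt hs.1, hs.2⟩
  -- integrabilities
  have hI1 : IntegrableOn (fun s => h s * E s) (Set.Ioc 0 t) :=
    aux_integrableOn_mul_bound measurableSet_Ioc hhi.integrableOn hEm
      (fun s hs => hCE s (hmem s hs))
  have hI2 : IntegrableOn (fun s => f s * E s) (Set.Ioc 0 t) :=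
    aux_integrableOn_mul_bound measurableSet_Ioc hfi.integrableOn hEm
      (fun s hs => hCE s (hmem s hs))
  have hI3 : IntegrableOn (fun s => (f s * E s) * Q s) (Set.Ioc 0 t) :=
    aux_integrableOn_mul_bound measurableSet_Ioc hI2 hQm
      (fun s hs => hCQ s (hmem s hs))
  -- exp primitive on subintervals
  have hexp : ∀ u : ℝ, 0 ≤ u → (∫ s in Set.Ioc 0 u, f s * E s) = E u - 1 := by
    intro u hu
    have := aux_exp_primitive hfm hfi hu
    rw [hPI u hu] at this
    rw [← this]
    refine setIntegral_congr_fun measurableSet_Ioc (fun s hs => ?_)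
    rw [hPI s (le_of_lt hs.1)]
  have hadj : ∀ r ∈ Set.Ioc 0 t, (∫ s in Set.Ioc r t, f s * E s) = E t - E r := by
    intro r hr
    have h1 : (∫ s in Set.Ioc 0 r, f s * E s) + (∫ s in Set.Ioc r t, f s * E s)
        = ∫ s in Set.Ioc 0 t, f s * E s := by
      rw [← MeasureTheory.setIntegral_union (Set.Ioc_disjoint_Ioc_of_le le_rfl)
        measurableSet_Ioc (hI2.mono_set (Set.Ioc_subset_Ioc_right hr.2))
        (hI2.mono_set (Set.Ioc_subset_Ioc_left (le_of_lt hr.1)))]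
      rw [Set.Ioc_union_Ioc_eq_Ioc (le_of_lt hr.1) hr.2]
    have h2 := hexp r (le_of_lt hr.1)
    have h3 := hexp t ht
    rw [h2] at h1
    linarith [h1, h3]
  -- main computation
  have hcong : ∀ s ∈ Set.Ioc 0 t,
      E s * (h s + f s * (c + Q s))
        = h s * E s + c * (f s * E s) + (f s * E s) * Q s := by
    intro s hs; ring
  have hRHS : (∫ s in Set.Ioc 0 t, Real.exp (∫ r in Set.Ioc 0 s, f r) *
      (h s + f s * (c + ∫ r in Set.Ioc 0 s, h r)))
      = (∫ s in Set.Ioc 0 t, h s * E s) + c * (E t - 1)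
        + ∫ s in Set.Ioc 0 t, (f s * E s) * Q s := by
    have e1 : (∫ s in Set.Ioc 0 t, Real.exp (∫ r in Set.Ioc 0 s, f r) *
        (h s + f s * (c + ∫ r in Set.Ioc 0 s, h r)))
        = ∫ s in Set.Ioc 0 t, (h s * E s + c * (f s * E s) + (f s * E s) * Q s) := by
      refine setIntegral_congr_fun measurableSet_Ioc (fun s hs => ?_)
      rw [hPI s (le_of_lt hs.1), hQI s (le_of_lt hs.1)]
      exact hcong s hs
    have hI12 : IntegrableOn (fun s => h s * E s + c * (f s * E s)) (Set.Ioc 0 t) :=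
      hI1.add (hI2.const_mul c)
    have hIc : IntegrableOn (fun s => c * (f s * E s)) (Set.Ioc 0 t) := hI2.const_mul c
    rw [e1, MeasureTheory.integral_add hI12 hI3, MeasureTheory.integral_add hI1 hIc,
      MeasureTheory.integral_const_mul, hexp t ht]
  -- Fubini for the last integral
  have hfub : (∫ s in Set.Ioc 0 t, (f s * E s) * Q s)
      = E t * Q t - ∫ s in Set.Ioc 0 t, h s * E s := by
    have e1 : (∫ s in Set.Ioc 0 t, (f s * E s) * Q s)
        = ∫ s in Set.Ioc 0 t, (f s * E s) * ∫ r in Set.Ioc 0 s, h r := by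
      refine setIntegral_congr_fun measurableSet_Ioc (fun s hs => ?_)
      rw [hQI s (le_of_lt hs.1)]
    rw [e1, aux_fubini_triangle (Φ := fun s => f s * E s) (hfm.mul hEm) hhm hI2 hhi.integrableOn]
    have e2 : (∫ r in Set.Ioc 0 t, h r * ∫ s in Set.Ioc r t, f s * E s)
        = ∫ r in Set.Ioc 0 t, (E t * h r - h r * E r) := by
      refine setIntegral_congr_fun measurableSet_Ioc (fun r hr => ?_)
      rw [hadj r hr]; ring
    have hIEt : IntegrableOn (fun r => E t * h r) (Set.Ioc 0 t) :=
      (hhi.integrableOn).const_mul (E t)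
    have hIhE : IntegrableOn (fun r => h r * E r) (Set.Ioc 0 t) := hI1
    rw [e2, MeasureTheory.integral_sub hIEt hIhE, MeasureTheory.integral_const_mul, hQI t ht]
  rw [hRHS, hfub, hPI t ht, hQI t ht]
  ring

/-- Lemma 6.10 (deterministic comparison lemma): if `f, g, M : [0,T] → ℝ` are
bounded measurable, `M` is right continuous of bounded variation,
`m = inf_{[0,T∧τ]} f > 0`, and `z` is bounded measurable with
`z(t) = z(0) − ∫₀ᵗ f z ds + ∫₀ᵗ g ds + M(t)` on `[0,T]`, then for
`t ∈ [0,T∧τ]`, `|z(t)| ≤ (sup|g|)/m + 2 sup|M| + e^{−mt}(|z(0)| + |M(0)|)`,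
with the sups over `[0,T∧τ]`. -/
theorem stmt15 (T : ℝ) (hT : 0 < T) (τ : ℝ) (hτ : 0 ≤ τ)
    (f g M z : ℝ → ℝ)
    (hfm : Measurable f) (hgm : Measurable g) (hMm : Measurable M)
    (hzm : Measurable z)
    (hfb : ∃ B : ℝ, ∀ s ∈ Set.Icc (0 : ℝ) T, |f s| ≤ B)
    (hgb : ∃ B : ℝ, ∀ s ∈ Set.Icc (0 : ℝ) T, |g s| ≤ B)
    (hMb : ∃ B : ℝ, ∀ s ∈ Set.Icc (0 : ℝ) T, |M s| ≤ B)
    (hzb : ∃ B : ℝ, ∀ s ∈ Set.Icc (0 : ℝ) T, |z s| ≤ B)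
    (hMrc : ∀ t ∈ Set.Icc (0 : ℝ) T, ContinuousWithinAt M (Set.Ici t) t)
    (hMbv : BoundedVariationOn M (Set.Icc (0 : ℝ) T))
    (hm : 0 < sInf (f '' Set.Icc 0 (min T τ)))
    (hz : ∀ t ∈ Set.Icc (0 : ℝ) T,
      z t = z 0 - (∫ s in (0 : ℝ)..t, f s * z s) + (∫ s in (0 : ℝ)..t, g s) + M t) :
    ∀ t ∈ Set.Icc 0 (min T τ),
      |z t| ≤ sSup ((fun s => |g s|) '' Set.Icc 0 (min T τ)) /
            sInf (f '' Set.Icc 0 (min T τ))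
          + 2 * sSup ((fun s => |M s|) '' Set.Icc 0 (min T τ))
          + Real.exp (-(sInf (f '' Set.Icc 0 (min T τ))) * t) * (|z 0| + |M 0|) := by
  intro t ht
  set tm := min T τ with htmdef
  have htm0 : 0 ≤ tm := le_min hT.le hτ
  have htmT : tm ≤ T := min_le_left _ _
  obtain ⟨ht0, httm⟩ := ht
  have htT : t ≤ T := le_trans httm htmT
  set m := sInf (f '' Set.Icc 0 tm) with hmdef
  obtain ⟨Bf, hBf⟩ := hfb
  obtain ⟨Bg, hBg⟩ := hgb
  obtain ⟨BM, hBM⟩ := hMb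
  obtain ⟨Bz, hBz⟩ := hzb
  have hsubT : Set.Icc 0 tm ⊆ Set.Icc (0:ℝ) T := Set.Icc_subset_Icc le_rfl htmT
  -- lower bound m ≤ f s
  have hbddb : BddBelow (f '' Set.Icc 0 tm) := by
    refine ⟨-Bf, fun x hx => ?_⟩
    obtain ⟨s, hs, rfl⟩ := hx
    have := hBf s (hsubT hs)
    linarith [abs_le.1 this |>.1]
  have hmle : ∀ s ∈ Set.Icc 0 tm, m ≤ f s := fun s hs =>
    csInf_le hbddb (Set.mem_image_of_mem f hs)
  -- sup of |g|
  set G := sSup ((fun s => |g s|) '' Set.Icc 0 tm) with hGdef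
  have hGge : ∀ s ∈ Set.Icc 0 tm, |g s| ≤ G := by
    intro s hs
    refine le_csSup ⟨Bg, fun x hx => ?_⟩ (Set.mem_image_of_mem _ hs)
    obtain ⟨r, hr, rfl⟩ := hx
    exact hBg r (hsubT hr)
  have hG0 : 0 ≤ G := le_trans (abs_nonneg _) (hGge 0 ⟨le_rfl, htm0⟩)
  -- sup of |M|
  set Mb := sSup ((fun s => |M s|) '' Set.Icc 0 tm) with hMbdef
  have hMge : ∀ s ∈ Set.Icc 0 tm, |M s| ≤ Mb := by
    intro s hs
    refine le_csSup ⟨BM, fun x hx => ?_⟩ (Set.mem_image_of_mem _ hs)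
    obtain ⟨r, hr, rfl⟩ := hx
    exact hBM r (hsubT hr)
  have hMb0 : 0 ≤ Mb := le_trans (abs_nonneg _) (hMge 0 ⟨le_rfl, htm0⟩)
  -- indicator versions
  set f' := Set.indicator (Set.Icc (0:ℝ) T) f with hf'def
  set h₀ : ℝ → ℝ := fun s => g s - f s * z s with hh₀def
  set h' := Set.indicator (Set.Icc (0:ℝ) T) h₀ with hh'def
  have hf'm : Measurable f' := hfm.indicator measurableSet_Icc
  have hf'i : Integrable f' :=
    (aux_integrableOn_of_bounded hfm hBf).integrable_indicator measurableSet_Icc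
  have hh₀m : Measurable h₀ := hgm.sub (hfm.mul hzm)
  have hh₀b : ∀ s ∈ Set.Icc (0:ℝ) T, |h₀ s| ≤ Bg + Bf * Bz := by
    intro s hs
    have h1 := hBg s hs; have h2 := hBf s hs; have h3 := hBz s hs
    have h4 : |f s * z s| ≤ Bf * Bz := by
      rw [abs_mul]
      exact mul_le_mul h2 h3 (abs_nonneg _) ((abs_nonneg _).trans h2)
    calc |h₀ s| ≤ |g s| + |f s * z s| := abs_sub _ _
      _ ≤ Bg + Bf * Bz := add_le_add h1 h4
  have hh'm : Measurable h' := hh₀m.indicator measurableSet_Icc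
  have hh'i : Integrable h' :=
    (aux_integrableOn_of_bounded hh₀m hh₀b).integrable_indicator measurableSet_Icc
  -- primitive of f'
  set P : ℝ → ℝ := fun u => ∫ r in (0:ℝ)..u, f' r with hPdef
  have hPc : Continuous P :=
    intervalIntegral.continuous_primitive (fun a b => hf'i.intervalIntegrable) 0
  have hPm : Measurable P := hPc.measurable
  have hPI : ∀ u : ℝ, 0 ≤ u → (∫ r in Set.Ioc 0 u, f' r) = P u := fun u hu =>
    (intervalIntegral.integral_of_le hu).symm
  set E : ℝ → ℝ := fun u => Real.exp (P u) with hEdef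
  have hEc : Continuous E := Real.continuous_exp.comp hPc
  have hEm : Measurable E := hEc.measurable
  have hEpos : ∀ u, 0 < E u := fun u => Real.exp_pos _
  -- M 0 = 0
  have hM0 : M 0 = 0 := by
    have := hz 0 ⟨le_rfl, hT.le⟩
    simp [intervalIntegral.integral_same] at this
    linarith
  -- the integral identity: z u - M u = z 0 + ∫ h' on Ioc 0 u
  have hheq : ∀ u ∈ Set.Icc (0:ℝ) T, z 0 + (∫ s in Set.Ioc 0 u, h' s) = z u - M u := by
    intro u hu
    have e1 : (∫ s in Set.Ioc 0 u, h' s) = ∫ s in Set.Ioc 0 u, h₀ s := by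
      refine setIntegral_congr_fun measurableSet_Ioc (fun s hs => ?_)
      exact Set.indicator_of_mem (show s ∈ Set.Icc (0:ℝ) T from
        ⟨le_of_lt hs.1, hs.2.trans hu.2⟩) h₀
    have hsub : Set.Ioc 0 u ⊆ Set.Icc (0:ℝ) T :=
      fun x hx => ⟨le_of_lt hx.1, hx.2.trans hu.2⟩
    have hgi : IntegrableOn g (Set.Ioc 0 u) :=
      (aux_integrableOn_of_bounded hgm hBg).mono_set hsub
    have hfzi : IntegrableOn (fun s => f s * z s) (Set.Ioc 0 u) :=
      (aux_integrableOn_of_bounded (f := fun s => f s * z s) (hfm.mul hzm)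
        (fun s hs => by
          rw [abs_mul]
          exact mul_le_mul (hBf s hs) (hBz s hs) (abs_nonneg _)
            ((abs_nonneg _).trans (hBf s hs)))).mono_set hsub
    have e2 : (∫ s in Set.Ioc 0 u, h₀ s)
        = (∫ s in Set.Ioc 0 u, g s) - ∫ s in Set.Ioc 0 u, f s * z s := by
      rw [← MeasureTheory.integral_sub hgi hfzi]
    have e3 : (∫ s in Set.Ioc 0 u, g s) = ∫ s in (0:ℝ)..u, g s :=
      (intervalIntegral.integral_of_le hu.1).symm
    have e4 : (∫ s in Set.Ioc 0 u, f s * z s) = ∫ s in (0:ℝ)..u, f s * z s :=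
      (intervalIntegral.integral_of_le hu.1).symm
    have := hz u hu
    rw [e1, e2, e3, e4]
    linarith
  -- interval integrals of f' agree with f on [0,T]
  have hfeq : ∀ s ∈ Set.Ioc 0 t, f' s = f s := fun s hs =>
    Set.indicator_of_mem (show s ∈ Set.Icc (0:ℝ) T from
      ⟨le_of_lt hs.1, hs.2.trans htT⟩) f
  -- key identity from variation of constants
  have key : E t * (z t - M t)
      = z 0 + ∫ s in Set.Ioc 0 t, (g s - f s * M s) * E s := by
    have h0 := aux_voc hf'm hf'i hh'm hh'i (z 0) ht0
    rw [hPI t ht0, hheq t ⟨ht0, htT⟩] at h0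
    rw [h0]
    congr 1
    refine setIntegral_congr_fun measurableSet_Ioc (fun s hs => ?_)
    have hs0 : (0:ℝ) ≤ s := le_of_lt hs.1
    have hsT : s ∈ Set.Icc (0:ℝ) T := ⟨hs0, hs.2.trans htT⟩
    rw [hPI s hs0, hheq s hsT, hfeq s hs]
    have : h' s = h₀ s := Set.indicator_of_mem hsT h₀
    rw [this]
    simp only [hh₀def]
    ring
  -- pointwise lower bounds
  have hfge : ∀ s ∈ Set.Ioc 0 t, m ≤ f s := fun s hs =>
    hmle s ⟨le_of_lt hs.1, hs.2.trans httm⟩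
  have hsubIoc : Set.Ioc 0 t ⊆ Set.Icc (0:ℝ) T :=
    fun x hx => ⟨le_of_lt hx.1, hx.2.trans htT⟩
  -- bound for E on [0,t]
  obtain ⟨CE, hCE⟩ := (isCompact_Icc (a := (0:ℝ)) (b := t)).exists_bound_of_continuousOn
    hEc.continuousOn
  have hCE' : ∀ s ∈ Set.Ioc 0 t, |E s| ≤ CE := fun s hs =>
    hCE s ⟨le_of_lt hs.1, hs.2⟩
  -- P t ≥ m * t
  have hPt_ge : m * t ≤ P t := by
    rw [← hPI t ht0]
    have h1 : (∫ _ in Set.Ioc (0:ℝ) t, m) ≤ ∫ s in Set.Ioc 0 t, f' s := by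
      refine setIntegral_mono_on (integrableOn_const ?_)
        hf'i.integrableOn measurableSet_Ioc (fun s hs => ?_)
      · rw [Real.volume_Ioc]; exact ENNReal.ofReal_ne_top
      · rw [hfeq s hs]; exact hfge s hs
    have h2 : (∫ _ in Set.Ioc (0:ℝ) t, m) = t * m := by
      rw [MeasureTheory.setIntegral_const, MeasureTheory.measureReal_def, Real.volume_Ioc, smul_eq_mul,
        ENNReal.toReal_ofReal (by linarith)]
      ring
    linarith
  -- P t - P s ≥ m * (t - s)
  have hPdiff : ∀ s ∈ Set.Ioc 0 t, m * (t - s) ≤ P t - P s := by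
    intro s hs
    have hst : s ≤ t := hs.2
    have hadj : P t - P s = ∫ r in Set.Ioc s t, f' r := by
      have h1 : (∫ r in (0:ℝ)..s, f' r) + (∫ r in s..t, f' r) = ∫ r in (0:ℝ)..t, f' r :=
        intervalIntegral.integral_add_adjacent_intervals hf'i.intervalIntegrable
          hf'i.intervalIntegrable
      have h2 : (∫ r in s..t, f' r) = ∫ r in Set.Ioc s t, f' r :=
        intervalIntegral.integral_of_le hst
      rw [hPdef]
      simp only []
      linarith [h1, h2.symm ▸ h1]
    have h1 : (∫ _ in Set.Ioc s t, m) ≤ ∫ r in Set.Ioc s t, f' r := by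
      refine setIntegral_mono_on (integrableOn_const ?_)
        hf'i.integrableOn measurableSet_Ioc (fun r hr => ?_)
      · rw [Real.volume_Ioc]; exact ENNReal.ofReal_ne_top
      · have hr' : r ∈ Set.Ioc 0 t := ⟨lt_trans hs.1 hr.1, hr.2⟩
        rw [hfeq r hr']; exact hfge r hr'
    have h2 : (∫ _ in Set.Ioc s t, m) = (t - s) * m := by
      rw [MeasureTheory.setIntegral_const, MeasureTheory.measureReal_def, Real.volume_Ioc, smul_eq_mul,
        ENNReal.toReal_ofReal (by linarith)]
    rw [hadj]
    linarith
  -- pointwise exponential bound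
  have hEbound : ∀ s ∈ Set.Ioc 0 t, E s ≤ E t * Real.exp (-(m*(t-s))) := by
    intro s hs
    have h1 := hPdiff s hs
    rw [hEdef]
    simp only []
    rw [← Real.exp_add]
    exact Real.exp_le_exp.2 (by linarith)
  -- integral of exponential bound
  have hexpint : (∫ s in Set.Ioc 0 t, Real.exp (-(m*(t-s)))) ≤ 1/m := by
    have hder : ∀ s ∈ Set.uIcc (0:ℝ) t,
        HasDerivAt (fun u => Real.exp (-(m*(t-u)))/m) (Real.exp (-(m*(t-s)))) s := by
      intro s _
      have h1 : HasDerivAt (fun u : ℝ => -(m*(t-u))) m s := by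
        simpa [Pi.neg_def] using (((hasDerivAt_id s).const_sub t).const_mul m).neg
      have h3 := h1.exp.div_const m
      rw [mul_div_cancel_right₀ _ hm.ne'] at h3
      exact h3
    have hc0 : Continuous fun s : ℝ => -(m*(t-s)) :=
      ((continuous_const.mul (continuous_const.sub continuous_id)).neg)
    have hcont : Continuous fun s : ℝ => Real.exp (-(m*(t-s))) :=
      Real.continuous_exp.comp hc0
    have hcalc := intervalIntegral.integral_eq_sub_of_hasDerivAt hder
      (hcont.intervalIntegrable 0 t)
    rw [← intervalIntegral.integral_of_le ht0, hcalc]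
    simp only [sub_self, mul_zero, neg_zero, Real.exp_zero]
    have h5 : 0 < m := hm
    have h6 : 0 < Real.exp (-(m * (t - 0))) / m := by positivity
    linarith
  -- integrabilities on Ioc 0 t
  have hgIoc : IntegrableOn g (Set.Ioc 0 t) :=
    (aux_integrableOn_of_bounded hgm hBg).mono_set hsubIoc
  have hfMIoc : IntegrableOn (fun s => f s * M s) (Set.Ioc 0 t) :=
    (aux_integrableOn_of_bounded (f := fun s => f s * M s) (hfm.mul hMm)
      (fun s hs => by
        rw [abs_mul]
        exact mul_le_mul (hBf s hs) (hBM s hs) (abs_nonneg _)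
          ((abs_nonneg _).trans (hBf s hs)))).mono_set hsubIoc
  have hfIoc : IntegrableOn f (Set.Ioc 0 t) :=
    (aux_integrableOn_of_bounded hfm hBf).mono_set hsubIoc
  have hIg : IntegrableOn (fun s => g s * E s) (Set.Ioc 0 t) :=
    aux_integrableOn_mul_bound measurableSet_Ioc hgIoc hEm hCE'
  have hIfM : IntegrableOn (fun s => (f s * M s) * E s) (Set.Ioc 0 t) :=
    aux_integrableOn_mul_bound measurableSet_Ioc hfMIoc hEm hCE'
  have hIfE : IntegrableOn (fun s => f s * E s) (Set.Ioc 0 t) :=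
    aux_integrableOn_mul_bound measurableSet_Ioc hfIoc hEm hCE'
  -- split the integral
  have hsplit : (∫ s in Set.Ioc 0 t, (g s - f s * M s) * E s)
      = (∫ s in Set.Ioc 0 t, g s * E s) - ∫ s in Set.Ioc 0 t, (f s * M s) * E s := by
    rw [← MeasureTheory.integral_sub hIg hIfM]
    refine setIntegral_congr_fun measurableSet_Ioc (fun s _ => ?_)
    ring
  -- bound on I1
  have hEt_pos : 0 < E t := hEpos t
  have hI1 : |∫ s in Set.Ioc 0 t, g s * E s| ≤ G * E t / m := by
    have habs : |∫ s in Set.Ioc 0 t, g s * E s| ≤ ∫ s in Set.Ioc 0 t, |g s| * |E s| := by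
      simpa [Real.norm_eq_abs] using
        MeasureTheory.norm_integral_le_integral_norm (μ := volume.restrict (Set.Ioc 0 t))
          (fun s => g s * E s)
    have hIgabs : IntegrableOn (fun s => |g s| * |E s|) (Set.Ioc 0 t) := by
      simpa [abs_mul, IntegrableOn] using hIg.abs
    have hmono : (∫ s in Set.Ioc 0 t, |g s| * |E s|)
        ≤ ∫ s in Set.Ioc 0 t, G * E t * Real.exp (-(m*(t-s))) := by
      refine setIntegral_mono_on hIgabs ?_ measurableSet_Ioc (fun s hs => ?_)
      · exact Continuous.integrableOn_Ioc (continuous_const.mul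
          (Real.continuous_exp.comp ((continuous_const.mul (continuous_const.sub continuous_id)).neg)))
      · rw [abs_of_pos (hEpos s), mul_assoc]
        exact mul_le_mul (hGge s ⟨le_of_lt hs.1, hs.2.trans httm⟩)
          (hEbound s hs) (hEpos s).le (by positivity)
    have hpull : (∫ s in Set.Ioc 0 t, G * E t * Real.exp (-(m*(t-s))))
        = G * E t * ∫ s in Set.Ioc 0 t, Real.exp (-(m*(t-s))) := by
      rw [← MeasureTheory.integral_const_mul]
    have hfin : G * E t * (∫ s in Set.Ioc 0 t, Real.exp (-(m*(t-s)))) ≤ G * E t * (1/m) :=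
      mul_le_mul_of_nonneg_left hexpint (by positivity)
    calc |∫ s in Set.Ioc 0 t, g s * E s| ≤ _ := habs
      _ ≤ _ := hmono
      _ = _ := hpull
      _ ≤ G * E t * (1/m) := hfin
      _ = G * E t / m := by ring
  -- exp primitive identity for f on Ioc 0 t
  have hfE : (∫ s in Set.Ioc 0 t, f s * E s) = E t - 1 := by
    have h1 := aux_exp_primitive hf'm hf'i ht0
    rw [hPI t ht0] at h1
    rw [← h1]
    refine setIntegral_congr_fun measurableSet_Ioc (fun s hs => ?_)
    rw [hfeq s hs, hPI s (le_of_lt hs.1)]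
  -- bound on I2
  have hI2 : |∫ s in Set.Ioc 0 t, (f s * M s) * E s| ≤ Mb * E t := by
    have habs : |∫ s in Set.Ioc 0 t, (f s * M s) * E s|
        ≤ ∫ s in Set.Ioc 0 t, |f s| * |M s| * |E s| := by
      simpa [Real.norm_eq_abs] using
        MeasureTheory.norm_integral_le_integral_norm (μ := volume.restrict (Set.Ioc 0 t))
          (fun s => (f s * M s) * E s)
    have hIfMabs : IntegrableOn (fun s => |f s| * |M s| * |E s|) (Set.Ioc 0 t) := by
      simpa [abs_mul, IntegrableOn] using hIfM.abs
    have hmono : (∫ s in Set.Ioc 0 t, |f s| * |M s| * |E s|)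
        ≤ ∫ s in Set.Ioc 0 t, Mb * (f s * E s) := by
      refine setIntegral_mono_on hIfMabs (hIfE.const_mul Mb) measurableSet_Ioc
        (fun s hs => ?_)
      have hfs : 0 < f s := lt_of_lt_of_le hm (hfge s hs)
      have hMs : |M s| ≤ Mb := hMge s ⟨le_of_lt hs.1, hs.2.trans httm⟩
      rw [abs_of_pos hfs, abs_of_pos (hEpos s)]
      calc f s * |M s| * E s ≤ f s * Mb * E s := by
            exact mul_le_mul_of_nonneg_right
              (mul_le_mul_of_nonneg_left hMs hfs.le) (hEpos s).le
        _ = Mb * (f s * E s) := by ring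
    have hpull : (∫ s in Set.Ioc 0 t, Mb * (f s * E s)) = Mb * (E t - 1) := by
      rw [MeasureTheory.integral_const_mul, hfE]
    calc |∫ s in Set.Ioc 0 t, (f s * M s) * E s| ≤ _ := habs
      _ ≤ _ := hmono
      _ = Mb * (E t - 1) := hpull
      _ ≤ Mb * E t := by nlinarith [hMb0]
  -- solve for z t
  have hztM : z t - M t = (E t)⁻¹ * (z 0 + ((∫ s in Set.Ioc 0 t, g s * E s)
      - ∫ s in Set.Ioc 0 t, (f s * M s) * E s)) := by
    have h1 := congrArg (fun x => (E t)⁻¹ * x) key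
    rw [inv_mul_cancel_left₀ (ne_of_gt hEt_pos)] at h1
    rw [h1, hsplit]
  -- inverse exponential bound
  have hinv : (E t)⁻¹ ≤ Real.exp (-(m*t)) := by
    rw [hEdef]
    simp only []
    rw [← Real.exp_neg]
    exact Real.exp_le_exp.2 (by linarith)
  have hinv_pos : 0 < (E t)⁻¹ := inv_pos.2 hEt_pos
  -- final estimate
  set I1 := ∫ s in Set.Ioc 0 t, g s * E s with hI1def
  set I2 := ∫ s in Set.Ioc 0 t, (f s * M s) * E s with hI2def
  have habs_zt : |z t| ≤ |M t| + (E t)⁻¹ * (|z 0| + |I1| + |I2|) := by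
    have h1 : z t = M t + (E t)⁻¹ * (z 0 + (I1 - I2)) := by
      linarith [hztM]
    rw [h1]
    calc |M t + (E t)⁻¹ * (z 0 + (I1 - I2))|
        ≤ |M t| + |(E t)⁻¹ * (z 0 + (I1 - I2))| := abs_add_le _ _
      _ = |M t| + (E t)⁻¹ * |z 0 + (I1 - I2)| := by
          rw [abs_mul, abs_of_pos hinv_pos]
      _ ≤ |M t| + (E t)⁻¹ * (|z 0| + |I1| + |I2|) := by
          refine add_le_add_right (mul_le_mul_of_nonneg_left ?_ hinv_pos.le) _
          calc |z 0 + (I1 - I2)| ≤ |z 0| + |I1 - I2| := abs_add_le _ _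
            _ ≤ |z 0| + (|I1| + |I2|) := add_le_add_right (abs_sub _ _) _
            _ = |z 0| + |I1| + |I2| := by ring
  have hterm1 : |M t| ≤ Mb := hMge t ⟨ht0, httm⟩
  have hterm2 : (E t)⁻¹ * |z 0| ≤ Real.exp (-(m*t)) * (|z 0| + |M 0|) := by
    have h1 : (E t)⁻¹ * |z 0| ≤ Real.exp (-(m*t)) * |z 0| :=
      mul_le_mul_of_nonneg_right hinv (abs_nonneg _)
    have h2 : Real.exp (-(m*t)) * |z 0| ≤ Real.exp (-(m*t)) * (|z 0| + |M 0|) :=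
      mul_le_mul_of_nonneg_left (by linarith [abs_nonneg (M 0)]) (Real.exp_pos _).le
    linarith
  have hterm3 : (E t)⁻¹ * |I1| ≤ G / m := by
    have h1 : (E t)⁻¹ * |I1| ≤ (E t)⁻¹ * (G * E t / m) :=
      mul_le_mul_of_nonneg_left hI1 hinv_pos.le
    have h2 : (E t)⁻¹ * (G * E t / m) = G / m := by
      field_simp
      try ring
    linarith
  have hterm4 : (E t)⁻¹ * |I2| ≤ Mb := by
    have h1 : (E t)⁻¹ * |I2| ≤ (E t)⁻¹ * (Mb * E t) :=
      mul_le_mul_of_nonneg_left hI2 hinv_pos.le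
    have h2 : (E t)⁻¹ * (Mb * E t) = Mb := by
      field_simp
    linarith
  rw [neg_mul]
  have hexpand : (E t)⁻¹ * (|z 0| + |I1| + |I2|)
      = (E t)⁻¹ * |z 0| + (E t)⁻¹ * |I1| + (E t)⁻¹ * |I2| := by ring
  rw [hexpand] at habs_zt
  linarith
end
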